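/- arXiv:1508.06772 — 5 statements merged into one kernel-verified Lean document; each statement's English description precedes it below -/
import Mathlib

section
/- The bounded transform T ↦ S = T(I + T²)^{-1/2} is a bijective correspondence between (possibly unbounded, densely defined) self-adjoint operators T on a complex Hilbert space H and self-adjoint pure contractions S on H, with inverse S ↦ T = S(I - S²)^{-1/2}. -/
noncomputable section

variable {H : Type*} [NormedAddCommGroup H] [InnerProductSpace ℂ H] [CompleteSpace H]

/-- `S = T(I + T²)^{-1/2}`, the *bounded transform* of the (possibly unbounded) operator `T`.
This is witnessed by `C = (I + T²)⁻¹` (a positive bounded operator mapping into the domain of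
`T²` with `(I + T²) ∘ C = I`, which determines `C` uniquely when `T` is self-adjoint) together
with its (unique) positive square root `R = (I + T²)^{-1/2}`, and `S = T ∘ R`. -/
def IsBoundedTransform (T : H →ₗ.[ℂ] H) (S : H →L[ℂ] H) : Prop :=
  ∃ C R : H →L[ℂ] H, C.IsPositive ∧ R.IsPositive ∧ R * R = C ∧
    (∀ x : H, ∃ (h1 : C x ∈ T.domain) (h2 : (T ⟨C x, h1⟩ : H) ∈ T.domain),
        C x + T ⟨(T ⟨C x, h1⟩ : H), h2⟩ = x) ∧
    (∀ x : H, ∃ hx : R x ∈ T.domain, S x = T ⟨R x, hx⟩)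

/-- `S` is a pure contraction: `‖Sx‖ < ‖x‖` for all `x ≠ 0`. -/
def PureContraction (S : H →L[ℂ] H) : Prop := ∀ x : H, x ≠ 0 → ‖S x‖ < ‖x‖

/-- `T = S(I - S²)^{-1/2}`: witnessed by the (unique) positive square root `R` of `I - S²`,
with `D(T) = ran R` and `T ∘ R = S`. -/
def IsInverseBoundedTransform (S : H →L[ℂ] H) (T : H →ₗ.[ℂ] H) : Prop :=
  ∃ R : H →L[ℂ] H, R.IsPositive ∧ R * R = 1 - S * S ∧
    (T.domain : Set H) = Set.range R ∧
    (∀ x : H, ∃ hx : R x ∈ T.domain, (T ⟨R x, hx⟩ : H) = S x)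

/-- The resolvent set of an unbounded operator: `z` such that `T - z` has a (bounded,
everywhere defined) two-sided inverse. -/
def pmapResolventSet (T : H →ₗ.[ℂ] H) : Set ℂ :=
  {z | ∃ B : H →L[ℂ] H,
    (∀ x : H, ∃ h : B x ∈ T.domain, (T ⟨B x, h⟩ : H) - z • B x = x) ∧
    (∀ ψ : T.domain, B ((T ψ : H) - z • (ψ : H)) = ψ)}

/-- The spectrum of an unbounded operator. -/
def pmapSpectrum (T : H →ₗ.[ℂ] H) : Set ℂ := (pmapResolventSet T)ᶜ

/-- The real points of the spectrum of `T` (all of them, if `T` is self-adjoint). -/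
def realSpec (T : H →ₗ.[ℂ] H) : Set ℝ := {x : ℝ | (x : ℂ) ∈ pmapSpectrum T}

/-- `g(S)` for a function `g : ℝ → ℂ`, via the continuous functional calculus of `S`. -/
def boundedCalc (S : H →L[ℂ] H) (g : ℝ → ℂ) : H →L[ℂ] H :=
  cfc (fun z : ℂ => g z.re) S

/-- The homeomorphism `u : (-1,1) → ℝ`, `u(x) = x(1 - x²)^{-1/2}`. -/
def uFun : ℝ → ℝ := fun x => x / Real.sqrt (1 - x ^ 2)

/-- `h ∘ u`, extended by `0` outside `(-1,1)`. -/
def compU (h : ℝ → ℂ) : ℝ → ℂ :=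
  fun x => if x ∈ Set.Ioo (-1 : ℝ) 1 then h (uFun x) else 0

/-- `h(T) := (h ∘ u)(S)`, for a function `h` on `σ(T)`, where `S` is the bounded
transform of `T`. -/
def pmapCalc (S : H →L[ℂ] H) (h : ℝ → ℂ) : H →L[ℂ] H := boundedCalc S (compU h)

/-- `σ̃(S) = σ(S) ∩ (-1,1)`. -/
def tildeSpec (S : H →L[ℂ] H) : Set ℝ := spectrum ℝ S ∩ Set.Ioo (-1) 1

/-- `g ∈ C_c(Ω)`: continuous on `Ω`, vanishing outside a compact subset of `Ω`
(functions on `Ω` are encoded as functions on `ℝ` vanishing identically outside `Ω`). -/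
def MemCc (g : ℝ → ℂ) (Ω : Set ℝ) : Prop :=
  ContinuousOn g Ω ∧ ∃ K : Set ℝ, IsCompact K ∧ K ⊆ Ω ∧ ∀ x ∉ K, g x = 0

/-- `g ∈ C₀(Ω)`: continuous on `Ω` and vanishing at infinity on `Ω`. -/
def MemC0 (g : ℝ → ℂ) (Ω : Set ℝ) : Prop :=
  ContinuousOn g Ω ∧ (∀ x ∉ Ω, g x = 0) ∧
    ∀ ε > 0, ∃ K : Set ℝ, IsCompact K ∧ K ⊆ Ω ∧ ∀ x ∈ Ω \ K, ‖g x‖ < ε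

/-- `g ∈ C_b(Ω)`: continuous and bounded on `Ω`. -/
def MemCb (g : ℝ → ℂ) (Ω : Set ℝ) : Prop :=
  ContinuousOn g Ω ∧ ∃ M : ℝ, ∀ x ∈ Ω, ‖g x‖ ≤ M

/-- The supremum norm `‖f‖_∞` of `f` over `Ω`. -/
def supNorm (f : ℝ → ℂ) (Ω : Set ℝ) : ℝ := sSup ((fun x => ‖f x‖) '' Ω)

/-- The subspace `C*_c(S)H`: the linear span of all `g(S)ψ` with `g ∈ C_c(σ̃(S))`. -/
def ccSpan (S : H →L[ℂ] H) : Submodule ℂ H :=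
  Submodule.span ℂ
    {v : H | ∃ g : ℝ → ℂ, MemCc g (tildeSpec S) ∧ ∃ ψ : H, v = boundedCalc S g ψ}

/-- The subspace `C*₀(S)H`: the linear span of all `g(S)ψ` with `g ∈ C₀(σ̃(S))`. -/
def c0Span (S : H →L[ℂ] H) : Submodule ℂ H :=
  Submodule.span ℂ
    {v : H | ∃ g : ℝ → ℂ, MemC0 g (tildeSpec S) ∧ ∃ ψ : H, v = boundedCalc S g ψ}

/-- `TR ⊂ RT`: the bounded operator `R` commutes with the unbounded operator `T`. -/
def CommutesPMap (T : H →ₗ.[ℂ] H) (R : H →L[ℂ] H) : Prop :=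
  ∀ ψ : T.domain, ∃ h : R (ψ : H) ∈ T.domain, (T ⟨R (ψ : H), h⟩ : H) = R (T ψ)

/-- `A = f₀(T)`: the operator with domain `C*_c(S)H` determined by
`f₀(T) h(T)ψ = (fh)(T)ψ` for `h ∈ C_c(σ(T))` (where `σT` is the spectrum of `T`,
and `h(T) = (h∘u)(S)`). -/
def IsF0 (S : H →L[ℂ] H) (σT : Set ℝ) (f : ℝ → ℂ) (A : H →ₗ.[ℂ] H) : Prop :=
  A.domain = ccSpan S ∧
  ∀ h : ℝ → ℂ, MemCc h σT → ∀ ψ : H,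
    ∃ hm : pmapCalc S h ψ ∈ A.domain,
      A ⟨pmapCalc S h ψ, hm⟩ = pmapCalc S (fun x => f x * h x) ψ

/-!
Von Neumann: since the graph of `T` is closed, projecting `(x, 0)` onto it in `H × H` gives
`C = (1 + T²)⁻¹` as a positive bounded operator, unique because `u + T²u = 0` forces
`‖u‖² + ‖Tu‖² = 0`. The bounded operators `V` with `VT ⊆ TV` form a norm-closed star subalgebra
(closed because `T` is, star-closed because `T = T*`), so it contains `R = √C` together with `C`.
On `D(T)` one finds `‖RTψ‖² + ‖Rψ‖² = ‖ψ‖²`, so `RT` extends to a contraction `S`, and closedness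
of `T` upgrades `TR ⊇ RT` to `S = TR` on all of `H`; then `S² = 1 - C` and `D(T) = ran R`.

Both transforms therefore say that the graph of `T` is `{(Rx, Sx)}` with `R = √(1 - S²)`, which
determines `T` from `S`. Conversely, for a self-adjoint pure contraction `S` this set is a graph
(`R` is injective), and it is self-adjoint: its adjoint is `{(u, v) | Su = Rv}`, and such a pair
is `(Rx, Sx)` for `x = Ru + Sv` since `R` and `S` commute and `R² + S² = 1`.
-/

open scoped InnerProductSpace

theorem commute_of_mul_self_eq_one_sub {A : Type*} [CStarAlgebra A] [PartialOrder A]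
    [StarOrderedRing A] {R S : A} (hR : 0 ≤ R) (h : R * R = 1 - S * S) : Commute R S := by
  rw [← CFC.sqrt_unique h hR]
  exact Commute.cfcₙ_nnreal
    ((Commute.one_left S).sub_left ((Commute.refl S).mul_left (Commute.refl S))) _

section InnerProductSpace

variable {𝕜 E : Type*} [RCLike 𝕜] [NormedAddCommGroup E] [InnerProductSpace 𝕜 E] [CompleteSpace E]

theorem ContinuousLinearMap.norm_sq_add_norm_sq_eq {A B : E →L[𝕜] E}
    (h : star A * A + star B * B = 1) (x : E) : ‖A x‖ ^ 2 + ‖B x‖ ^ 2 = ‖x‖ ^ 2 := by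
  rw [apply_norm_sq_eq_inner_adjoint_left, apply_norm_sq_eq_inner_adjoint_left, ← map_add,
    ← inner_add_left, ← inner_self_eq_norm_sq (𝕜 := 𝕜), ← star_eq_adjoint, ← star_eq_adjoint]
  congr 2
  simpa using congrArg (· x) h

theorem IsSelfAdjoint.denseRange_of_injective {A : E →L[𝕜] E} (hA : IsSelfAdjoint A)
    (hinj : Function.Injective A) : DenseRange A := by
  rw [DenseRange, ← A.coe_coe, ← LinearMap.coe_range,
    Submodule.dense_iff_topologicalClosure_eq_top, Submodule.topologicalClosure_eq_top_iff,
    A.orthogonal_range, hA.adjoint_eq]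
  exact LinearMap.ker_eq_bot.mpr hinj

end InnerProductSpace

namespace LinearPMap

theorem mem_graph_iff_exists {R E F : Type*} [Ring R] [AddCommGroup E] [Module R E]
    [AddCommGroup F] [Module R F] (T : E →ₗ.[R] F) {x : E} {y : F} :
    (x, y) ∈ T.graph ↔ ∃ h : x ∈ T.domain, T ⟨x, h⟩ = y := by
  simp

theorem IsClosed.mem_graph_of_dense {R E F G : Type*} [CommRing R] [AddCommGroup E] [Module R E]
    [TopologicalSpace E] [AddCommGroup F] [Module R F] [TopologicalSpace F] [AddCommGroup G]
    [Module R G] [TopologicalSpace G] {T : E →ₗ.[R] F} (hT : T.IsClosed) (f : G →L[R] E)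
    (g : G →L[R] F) {D : Set G} (hD : Dense D) (h : ∀ x ∈ D, (f x, g x) ∈ T.graph) (x : G) :
    (f x, g x) ∈ T.graph :=
  (hT.preimage (f.continuous.prodMk g.continuous)).closure_subset_iff.mpr h (hD x)

end LinearPMap

omit [CompleteSpace H] in
theorem commutesPMap_iff {T : H →ₗ.[ℂ] H} {V : H →L[ℂ] H} :
    CommutesPMap T V ↔ ∀ ⦃x y : H⦄, (x, y) ∈ T.graph → (V x, V y) ∈ T.graph := by
  simp only [CommutesPMap, LinearPMap.mem_graph_iff, Subtype.exists]
  constructor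
  · rintro h x y ⟨x, hx, rfl, rfl⟩
    obtain ⟨hVx, e⟩ := h ⟨x, hx⟩
    exact ⟨_, hVx, rfl, e⟩
  · rintro h ⟨x, hx⟩
    obtain ⟨_, hVx, rfl, e⟩ := h (x := x) ⟨x, hx, rfl, rfl⟩
    exact ⟨hVx, e⟩

namespace IsSelfAdjoint

section RCLike

variable {𝕜 E : Type*} [RCLike 𝕜] [NormedAddCommGroup E] [InnerProductSpace 𝕜 E] [CompleteSpace E]
  {T : E →ₗ.[𝕜] E}

theorem mem_graph_iff (hT : IsSelfAdjoint T) {u v : E} :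
    (u, v) ∈ T.graph ↔ ∀ a b, (a, b) ∈ T.graph → ⟪b, u⟫_𝕜 = ⟪a, v⟫_𝕜 := by
  conv_lhs => rw [← LinearPMap.isSelfAdjoint_def.mp hT,
    LinearPMap.adjoint_graph_eq_graph_adjoint hT.dense_domain]
  simp only [Submodule.mem_adjoint_iff, sub_eq_zero]

theorem inner_eq_of_mem_graph (hT : IsSelfAdjoint T) {x x' y y' : E}
    (hx : (x, x') ∈ T.graph) (hy : (y, y') ∈ T.graph) : ⟪x', y⟫_𝕜 = ⟪x, y'⟫_𝕜 :=
  hT.mem_graph_iff.mp hy x x' hx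

theorem eq_zero_of_mem_graph_of_mem_graph_neg (hT : IsSelfAdjoint T) {u v : E}
    (h₁ : (u, v) ∈ T.graph) (h₂ : (v, -u) ∈ T.graph) : u = 0 := by
  have h := congrArg RCLike.re (hT.inner_eq_of_mem_graph h₁ h₂)
  rw [inner_neg_right, map_neg, inner_self_eq_norm_sq, inner_self_eq_norm_sq] at h
  have hu : ‖u‖ ^ 2 = 0 := by linarith [sq_nonneg ‖u‖, sq_nonneg ‖v‖]
  simpa using hu

end RCLike

variable {T : H →ₗ.[ℂ] H}

def commutant (hT : IsSelfAdjoint T) : StarSubalgebra ℂ (H →L[ℂ] H) where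
  carrier := {V | CommutesPMap T V}
  mul_mem' {V W} hV hW := commutesPMap_iff.mpr fun x y h =>
    commutesPMap_iff.mp hV (commutesPMap_iff.mp hW h)
  add_mem' {V W} hV hW := commutesPMap_iff.mpr fun x y h =>
    add_mem (commutesPMap_iff.mp hV h) (commutesPMap_iff.mp hW h)
  algebraMap_mem' c := commutesPMap_iff.mpr fun x y h => by
    simpa [Algebra.algebraMap_eq_smul_one] using T.graph.smul_mem c h
  star_mem' {V} hV := commutesPMap_iff.mpr fun x y h => by
    refine hT.mem_graph_iff.mpr fun a b hab => ?_
    rw [ContinuousLinearMap.star_eq_adjoint, ContinuousLinearMap.adjoint_inner_right,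
      ContinuousLinearMap.adjoint_inner_right]
    exact hT.inner_eq_of_mem_graph (commutesPMap_iff.mp hV hab) h

theorem isClosed_commutant (hT : IsSelfAdjoint T) :
    _root_.IsClosed (hT.commutant : Set (H →L[ℂ] H)) := by
  change _root_.IsClosed {V : H →L[ℂ] H | CommutesPMap T V}
  simp only [commutesPMap_iff, Set.ofPred_forall]
  exact isClosed_iInter fun x => isClosed_iInter fun y => isClosed_iInter fun _ =>
    hT.isClosed.preimage (by fun_prop)

theorem commutesPMap_sqrt (hT : IsSelfAdjoint T) {V : H →L[ℂ] H} (hV : CommutesPMap T V) :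
    CommutesPMap T (CFC.sqrt V) := by
  by_cases h0 : 0 ≤ V
  · have := hT.isClosed_commutant
    rw [CFC.sqrt_eq_real_sqrt V]
    exact cfcₙ_mem (s := hT.commutant) _ hV
  · rw [CFC.sqrt_of_not_nonneg h0]
    exact hT.commutant.zero_mem

end IsSelfAdjoint

def IsInvOneAddSq (T : H →ₗ.[ℂ] H) (C : H →L[ℂ] H) : Prop :=
  ∀ x, ∃ y, (C x, y) ∈ T.graph ∧ (y, x - C x) ∈ T.graph

theorem IsSelfAdjoint.exists_isInvOneAddSq {T : H →ₗ.[ℂ] H} (hT : IsSelfAdjoint T) :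
    ∃ C : H →L[ℂ] H, IsInvOneAddSq T C := by
  let e := WithLp.prodContinuousLinearEquiv 2 ℂ H H
  let K : Submodule ℂ (WithLp 2 (H × H)) := T.graph.comap e.toLinearEquiv.toLinearMap
  have : CompleteSpace K := (hT.isClosed.preimage e.continuous).completeSpace_coe
  let p : H →L[ℂ] H × H :=
    e.toContinuousLinearMap ∘L K.starProjection ∘L e.symm.toContinuousLinearMap ∘L
      ContinuousLinearMap.inl ℂ H H
  refine ⟨ContinuousLinearMap.fst ℂ H H ∘L p, fun x => ⟨(p x).2, K.starProjection_apply_mem _, ?_⟩⟩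
  -- `(x, 0) - p x = (x - C x, -y)` is orthogonal to the graph, so `(y, x - C x)` lies in `T* = T`.
  refine hT.mem_graph_iff.mpr fun a b hab => ?_
  have h := (K.mem_orthogonal _).mp (K.sub_starProjection_mem_orthogonal (e.symm (x, 0)))
    (e.symm (a, b)) (by simpa [K] using hab)
  simp [p, e, WithLp.prod_inner_apply, inner_sub_right] at h ⊢
  linear_combination -h

omit [CompleteSpace H] in
theorem isInvOneAddSq_iff {T : H →ₗ.[ℂ] H} {C : H →L[ℂ] H} : IsInvOneAddSq T C ↔
    ∀ x : H, ∃ (h1 : C x ∈ T.domain) (h2 : (T ⟨C x, h1⟩ : H) ∈ T.domain),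
      C x + T ⟨(T ⟨C x, h1⟩ : H), h2⟩ = x := by
  simp only [IsInvOneAddSq, LinearPMap.mem_graph_iff_exists, eq_sub_iff_add_eq']
  constructor
  · rintro h x
    obtain ⟨_, ⟨h1, rfl⟩, h2, e⟩ := h x
    exact ⟨h1, h2, e⟩
  · rintro h x
    obtain ⟨h1, h2, e⟩ := h x
    exact ⟨_, ⟨h1, rfl⟩, h2, e⟩

omit [CompleteSpace H] in
theorem isBoundedTransform_iff {T : H →ₗ.[ℂ] H} {S : H →L[ℂ] H} : IsBoundedTransform T S ↔
    ∃ C R : H →L[ℂ] H, 0 ≤ C ∧ 0 ≤ R ∧ R * R = C ∧ IsInvOneAddSq T C ∧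
      ∀ x, (R x, S x) ∈ T.graph := by
  simp only [IsBoundedTransform, isInvOneAddSq_iff, ContinuousLinearMap.nonneg_iff_isPositive,
    LinearPMap.mem_graph_iff_exists, eq_comm (a := S _)]

namespace IsInvOneAddSq

variable {T : H →ₗ.[ℂ] H} {C : H →L[ℂ] H}

theorem unique (hT : IsSelfAdjoint T) (hC : IsInvOneAddSq T C) {C' : H →L[ℂ] H}
    (hC' : IsInvOneAddSq T C') : C = C' := by
  ext x
  obtain ⟨y, h₁, h₂⟩ := hC x
  obtain ⟨y', h₁', h₂'⟩ := hC' x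
  have h : (y - y', -(C x - C' x)) ∈ T.graph := by
    convert sub_mem h₂ h₂' using 1
    rw [Prod.mk_sub_mk]
    congr 1
    abel
  exact sub_eq_zero.mp (hT.eq_zero_of_mem_graph_of_mem_graph_neg (sub_mem h₁ h₁') h)

theorem nonneg (hT : IsSelfAdjoint T) (hC : IsInvOneAddSq T C) : 0 ≤ C := by
  refine (C.nonneg_iff_isPositive.trans C.isPositive_iff_complex).mpr fun x => ?_
  obtain ⟨y, h₁, h₂⟩ := hC x
  have h : ⟪C x, x⟫_ℂ = ((‖C x‖ ^ 2 + ‖y‖ ^ 2 : ℝ) : ℂ) := by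
    have := hT.inner_eq_of_mem_graph h₁ h₂
    rw [inner_sub_right, inner_self_eq_norm_sq_to_K, inner_self_eq_norm_sq_to_K] at this
    push_cast
    linear_combination -this
  rw [h, RCLike.re_to_complex, Complex.ofReal_re]
  exact ⟨rfl, by positivity⟩

/-- For `(x, y)` in the graph, `TCx` and `CTx = Cy` both solve `u + T²u = Tx`. -/
theorem commutesPMap (hT : IsSelfAdjoint T) (hC : IsInvOneAddSq T C) : CommutesPMap T C := by
  refine commutesPMap_iff.mpr fun x y hxy => ?_
  obtain ⟨u, hu₁, hu₂⟩ := hC x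
  obtain ⟨v, hv₁, hv₂⟩ := hC y
  have h₁ : (u - C y, x - C x - v) ∈ T.graph := sub_mem hu₂ hv₁
  have h₂ : (x - C x - v, -(u - C y)) ∈ T.graph := by
    convert sub_mem (sub_mem hxy hu₁) hv₂ using 1
    simp only [Prod.mk_sub_mk]
    congr 1
    abel
  simpa [sub_eq_zero.mp (hT.eq_zero_of_mem_graph_of_mem_graph_neg h₁ h₂)] using hu₁

theorem commutesPMap_of_mul_self_eq (hT : IsSelfAdjoint T) (hC : IsInvOneAddSq T C)
    {R : H →L[ℂ] H} (hR : 0 ≤ R) (hRR : R * R = C) : CommutesPMap T R :=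
  CFC.sqrt_unique hRR hR ▸ hT.commutesPMap_sqrt (hC.commutesPMap hT)

theorem inner_apply_add_inner_apply (hT : IsSelfAdjoint T) (hC : IsInvOneAddSq T C) {ψ φ : H}
    (h : (ψ, φ) ∈ T.graph) : ⟪φ, C φ⟫_ℂ + ⟪ψ, C ψ⟫_ℂ = ⟪ψ, ψ⟫_ℂ := by
  obtain ⟨u, hu₁, hu₂⟩ := hC ψ
  have hCφ : (C φ, ψ - C ψ) ∈ T.graph := by
    rwa [← T.mem_graph_snd_inj hu₁ (commutesPMap_iff.mp (hC.commutesPMap hT) h) rfl]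
  rw [hT.inner_eq_of_mem_graph h hCφ, inner_sub_right, sub_add_cancel]

theorem exists_isBoundedTransform (hT : IsSelfAdjoint T) (hC : IsInvOneAddSq T C) :
    ∃ S, IsBoundedTransform T S := by
  have hC0 := hC.nonneg hT
  set R := CFC.sqrt C
  have hR0 : 0 ≤ R := CFC.sqrt_nonneg C
  have hRR : R * R = C := CFC.sqrt_mul_sqrt_self C
  have hRT := hC.commutesPMap_of_mul_self_eq hT hR0 hRR
  have hnorm : ∀ v, RCLike.re ⟪v, C v⟫_ℂ = ‖R v‖ ^ 2 := fun v => by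
    rw [← hRR, ← inner_self_eq_norm_sq (𝕜 := ℂ)]
    exact congrArg _ ((IsSelfAdjoint.of_nonneg hR0).isSymmetric v (R v)).symm
  have hbound : ∀ ψ : T.domain, ‖R (T ψ)‖ ≤ 1 * ‖(ψ : H)‖ := fun ψ => by
    have h := congrArg RCLike.re (hC.inner_apply_add_inner_apply hT (T.mem_graph ψ))
    rw [map_add, hnorm, hnorm, inner_self_eq_norm_sq] at h
    nlinarith [norm_nonneg (R (T ψ)), norm_nonneg (ψ : H), sq_nonneg ‖R ψ‖]
  let S := (R.toLinearMap ∘ₗ T.toFun).extendOfNorm T.domain.subtype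
  have hS : ∀ ψ : T.domain, S ψ = R (T ψ) :=
    LinearMap.extendOfNorm_eq hT.dense_domain.denseRange_val ⟨1, hbound⟩
  refine ⟨S, isBoundedTransform_iff.mpr ⟨C, R, hC0, hR0, hRR, hC, ?_⟩⟩
  refine hT.isClosed.mem_graph_of_dense R S hT.dense_domain fun x hx => ?_
  rw [show x = ((⟨x, hx⟩ : T.domain) : H) from rfl, hS]
  exact commutesPMap_iff.mp hRT (T.mem_graph ⟨x, hx⟩)

end IsInvOneAddSq

theorem pureContraction_iff_injective {R S : H →L[ℂ] H} (h : star R * R + star S * S = 1) :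
    PureContraction S ↔ Function.Injective R := by
  rw [injective_iff_map_eq_zero]
  refine ⟨fun hS x hx => by_contra fun hne => ?_, fun hR x hx => ?_⟩
  · have := ContinuousLinearMap.norm_sq_add_norm_sq_eq h x
    rw [hx, norm_zero] at this
    nlinarith [hS x hne, norm_nonneg (S x)]
  · have := ContinuousLinearMap.norm_sq_add_norm_sq_eq h x
    have hRx : 0 < ‖R x‖ := norm_pos_iff.mpr fun h0 => hx (hR x h0)
    nlinarith [norm_nonneg (S x), norm_nonneg x]

omit [CompleteSpace H] in
theorem PureContraction.norm_le_one {S : H →L[ℂ] H} (hp : PureContraction S) : ‖S‖ ≤ 1 := by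
  refine S.opNorm_le_bound zero_le_one fun x => ?_
  rcases eq_or_ne x 0 with rfl | hx
  · simp
  · simpa using (hp x hx).le

theorem PureContraction.one_sub_mul_self_nonneg {S : H →L[ℂ] H} (hp : PureContraction S)
    (hS : IsSelfAdjoint S) : 0 ≤ 1 - S * S := by
  have h := CStarAlgebra.star_mul_le_algebraMap_norm_sq (a := S)
  rw [hS.star_eq, Algebra.algebraMap_eq_smul_one] at h
  refine sub_nonneg.mpr (h.trans ?_)
  simpa using smul_le_smul_of_nonneg_right (pow_le_one₀ (norm_nonneg _) hp.norm_le_one)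
    (zero_le_one' (H →L[ℂ] H))

section Transform

variable {T : H →ₗ.[ℂ] H} {S : H →L[ℂ] H}

omit [CompleteSpace H] in
theorem domain_eq_range_of_graph_eq_range {R : H →L[ℂ] H}
    (hG : T.graph = LinearMap.range ((R : H →ₗ[ℂ] H).prod S)) :
    (T.domain : Set H) = Set.range R := by
  ext u
  simp [LinearPMap.mem_domain_iff, hG]

omit [CompleteSpace H] in
theorem mem_graph_of_graph_eq_range {R : H →L[ℂ] H}
    (hG : T.graph = LinearMap.range ((R : H →ₗ[ℂ] H).prod S)) (x : H) : (R x, S x) ∈ T.graph :=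
  hG ▸ ⟨x, rfl⟩

omit [CompleteSpace H] in
theorem isInverseBoundedTransform_iff : IsInverseBoundedTransform S T ↔
    ∃ R : H →L[ℂ] H, 0 ≤ R ∧ R * R = 1 - S * S ∧
      T.graph = LinearMap.range ((R : H →ₗ[ℂ] H).prod S) := by
  simp only [IsInverseBoundedTransform, ← ContinuousLinearMap.nonneg_iff_isPositive]
  refine exists_congr fun R => and_congr_right fun _ => and_congr_right fun _ => ?_
  simp only [← LinearPMap.mem_graph_iff_exists]
  constructor
  · rintro ⟨hdom, hS⟩
    ext ⟨u, v⟩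
    refine ⟨fun h => ?_, ?_⟩
    · obtain ⟨x, rfl⟩ : u ∈ Set.range R := hdom ▸ LinearPMap.mem_domain_of_mem_graph h
      exact ⟨x, Prod.ext rfl (T.mem_graph_snd_inj (hS x) h rfl)⟩
    · rintro ⟨x, hx⟩
      rw [← hx]
      exact hS x
  · intro hG
    exact ⟨domain_eq_range_of_graph_eq_range hG, mem_graph_of_graph_eq_range hG⟩

theorem IsBoundedTransform.unique (hT : IsSelfAdjoint T) {S' : H →L[ℂ] H}
    (h : IsBoundedTransform T S) (h' : IsBoundedTransform T S') : S = S' := by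
  obtain ⟨C, R, -, hR, hRR, hC, hS⟩ := isBoundedTransform_iff.mp h
  obtain ⟨C', R', -, hR', hRR', hC', hS'⟩ := isBoundedTransform_iff.mp h'
  have hReq : R = R' := by
    rw [← CFC.sqrt_unique hRR hR, ← CFC.sqrt_unique hRR' hR', hC.unique hT hC']
  ext x
  exact T.mem_graph_snd_inj (hS x) (hS' x) (by rw [hReq])

theorem IsBoundedTransform.isInverseBoundedTransform (hT : IsSelfAdjoint T)
    (h : IsBoundedTransform T S) : IsInverseBoundedTransform S T := by
  obtain ⟨C, R, -, hR, hRR, hC, hS⟩ := isBoundedTransform_iff.mp h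
  have hRT := commutesPMap_iff.mp (hC.commutesPMap_of_mul_self_eq hT hR hRR)
  have hCRS : ∀ x, (C x, R (S x)) ∈ T.graph := fun x => hRR ▸ hRT (hS x)
  have hSS : S * S = 1 - C := by
    ext x
    obtain ⟨y, h₁, h₂⟩ := hC x
    rw [T.mem_graph_snd_inj h₁ (hCRS x) rfl] at h₂
    exact T.mem_graph_snd_inj (hS (S x)) h₂ rfl
  refine isInverseBoundedTransform_iff.mpr ⟨R, hR, by rw [hSS, sub_sub_cancel, hRR], ?_⟩
  ext ⟨u, v⟩
  refine ⟨fun huv => ?_, ?_⟩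
  · have hu : R (R u + S v) = u := by
      obtain ⟨y, h₁, h₂⟩ := hC u
      rw [T.mem_graph_snd_inj h₁ (commutesPMap_iff.mp (hC.commutesPMap hT) huv) rfl] at h₂
      rw [map_add]
      change (R * R) u + R (S v) = u
      rw [hRR, T.mem_graph_snd_inj (hCRS v) h₂ rfl]
      abel
    exact ⟨R u + S v, Prod.ext hu (T.mem_graph_snd_inj (hS _) huv hu)⟩
  · rintro ⟨x, hx⟩
    rw [← hx]
    exact hS x

theorem isSelfAdjoint_of_graph_eq_range {R : H →L[ℂ] H} (hR : 0 ≤ R) (hS : IsSelfAdjoint S)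
    (hRR : R * R = 1 - S * S) (hT : Dense (T.domain : Set H))
    (hG : T.graph = LinearMap.range ((R : H →ₗ[ℂ] H).prod S)) : IsSelfAdjoint T := by
  have hRsymm : ∀ x y, ⟪R x, y⟫_ℂ = ⟪x, R y⟫_ℂ := (IsSelfAdjoint.of_nonneg hR).isSymmetric
  have hSsymm : ∀ x y, ⟪S x, y⟫_ℂ = ⟪x, S y⟫_ℂ := hS.isSymmetric
  have hRS : ∀ w, R (S w) = S (R w) := fun w =>
    congrArg (· w) (commute_of_mul_self_eq_one_sub hR hRR).eq
  have hsum : ∀ w, R (R w) + S (S w) = w := fun w => by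
    simpa using congrArg (· w) (eq_sub_iff_add_eq.mp hRR)
  refine LinearPMap.isSelfAdjoint_def.mpr (LinearPMap.eq_of_eq_graph ?_)
  rw [LinearPMap.adjoint_graph_eq_graph_adjoint hT, hG]
  ext ⟨u, v⟩
  simp only [Submodule.mem_adjoint_iff, LinearMap.mem_range, LinearMap.prod_apply,
    ContinuousLinearMap.coe_coe, Function.prod_apply, Prod.mk.injEq, sub_eq_zero]
  constructor
  · intro h
    have hSu : S u = R v := ext_inner_left ℂ fun x => by
      rw [← hSsymm, ← hRsymm]
      exact h _ _ ⟨x, rfl, rfl⟩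
    exact ⟨R u + S v, by rw [map_add, hRS, ← hSu, hsum], by rw [map_add, ← hRS, hSu, hsum]⟩
  · rintro ⟨x, rfl, rfl⟩ a b ⟨y, rfl, rfl⟩
    rw [hSsymm, hRsymm, hRS]

omit [CompleteSpace H] in
theorem injective_of_graph_eq_range {R : H →L[ℂ] H} (hRR : R * R = 1 - S * S)
    (hG : T.graph = LinearMap.range ((R : H →ₗ[ℂ] H).prod S)) : Function.Injective R := by
  refine (injective_iff_map_eq_zero R).mpr fun x hx => ?_
  have hSx : S x = 0 := T.graph_fst_eq_zero_snd (mem_graph_of_graph_eq_range hG x) hx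
  simpa [hx, hSx] using (congrArg (· x) (eq_sub_iff_add_eq.mp hRR)).symm

namespace IsInverseBoundedTransform

theorem isBoundedTransform (h : IsInverseBoundedTransform S T) : IsBoundedTransform T S := by
  obtain ⟨R, hR, hRR, hG⟩ := isInverseBoundedTransform_iff.mp h
  have hS := mem_graph_of_graph_eq_range hG
  have hRS : ∀ w, R (S w) = S (R w) := fun w =>
    congrArg (· w) (commute_of_mul_self_eq_one_sub hR hRR).eq
  refine isBoundedTransform_iff.mpr ⟨R * R, R, ?_, hR, rfl, fun x => ⟨R (S x), ?_, ?_⟩, hS⟩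
  · simpa [(IsSelfAdjoint.of_nonneg hR).star_eq] using star_mul_self_nonneg R
  · rw [hRS]
    exact hS (R x)
  · rw [hRR]
    simpa using hS (S x)

theorem unique {T' : H →ₗ.[ℂ] H} (h : IsInverseBoundedTransform S T)
    (h' : IsInverseBoundedTransform S T') : T = T' := by
  obtain ⟨R, hR, hRR, hG⟩ := isInverseBoundedTransform_iff.mp h
  obtain ⟨R', hR', hRR', hG'⟩ := isInverseBoundedTransform_iff.mp h'
  obtain rfl : R = R' := by rw [← CFC.sqrt_unique hRR hR, CFC.sqrt_unique hRR' hR']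
  exact LinearPMap.eq_of_eq_graph (hG.trans hG'.symm)

theorem isSelfAdjoint (hT : IsSelfAdjoint T) (h : IsInverseBoundedTransform S T) :
    IsSelfAdjoint S := by
  obtain ⟨R, hR, hRR, hG⟩ := isInverseBoundedTransform_iff.mp h
  have hS := mem_graph_of_graph_eq_range hG
  have hRsymm : ∀ x y, ⟪R x, y⟫_ℂ = ⟪x, R y⟫_ℂ := (IsSelfAdjoint.of_nonneg hR).isSymmetric
  have hRS : ∀ w, R (S w) = S (R w) := fun w =>
    congrArg (· w) (commute_of_mul_self_eq_one_sub hR hRR).eq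
  have hdense := (IsSelfAdjoint.of_nonneg hR).denseRange_of_injective
    (injective_of_graph_eq_range hRR hG)
  refine ContinuousLinearMap.isSelfAdjoint_iff'.mpr <| ContinuousLinearMap.coeFn_injective <|
    hdense.equalizer (map_continuous _) (map_continuous _)
      (funext fun y => ext_inner_left ℂ fun x => ?_)
  simp only [Function.comp_apply, ContinuousLinearMap.adjoint_inner_right,
    hT.inner_eq_of_mem_graph (hS x) (hS y), hRsymm, hRS]

theorem pureContraction (hT : IsSelfAdjoint T) (h : IsInverseBoundedTransform S T) :
    PureContraction S := by
  have hS := h.isSelfAdjoint hT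
  obtain ⟨R, hR, hRR, hG⟩ := isInverseBoundedTransform_iff.mp h
  refine (pureContraction_iff_injective ?_).mpr (injective_of_graph_eq_range hRR hG)
  rw [(IsSelfAdjoint.of_nonneg hR).star_eq, hS.star_eq, hRR, sub_add_cancel]

end IsInverseBoundedTransform

theorem PureContraction.exists_isInverseBoundedTransform (hp : PureContraction S)
    (hS : IsSelfAdjoint S) : ∃ T : H →ₗ.[ℂ] H, Dense (T.domain : Set H) ∧ IsSelfAdjoint T ∧
      IsInverseBoundedTransform S T := by
  set R := CFC.sqrt (1 - S * S)
  have hR : 0 ≤ R := CFC.sqrt_nonneg _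
  have hRR : R * R = 1 - S * S := CFC.sqrt_mul_sqrt_self _ (hp.one_sub_mul_self_nonneg hS)
  have hinj : Function.Injective R := (pureContraction_iff_injective (by
    rw [(IsSelfAdjoint.of_nonneg hR).star_eq, hS.star_eq, hRR, sub_add_cancel])).mp hp
  set G := LinearMap.range ((R : H →ₗ[ℂ] H).prod (S : H →ₗ[ℂ] H))
  have hG := G.toLinearPMap_graph_eq (by
    rintro _ ⟨x, rfl⟩ hx
    simp [hinj (hx.trans (map_zero R).symm)])
  have hdense : Dense (G.toLinearPMap.domain : Set H) := by
    rw [domain_eq_range_of_graph_eq_range hG]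
    exact (IsSelfAdjoint.of_nonneg hR).denseRange_of_injective hinj
  exact ⟨G.toLinearPMap, hdense, isSelfAdjoint_of_graph_eq_range hR hS hRR hdense hG,
    isInverseBoundedTransform_iff.mpr ⟨R, hR, hRR, hG⟩⟩

end Transform

/-- The bounded transform `T ↦ S = T(I + T²)^{-1/2}` is a bijective correspondence between
densely defined self-adjoint operators `T` on `H` and self-adjoint pure contractions `S` on
`H`, with inverse `S ↦ T = S(I - S²)^{-1/2}`. -/
theorem boundedTransform_bijective_correspondence :
    (∀ T : H →ₗ.[ℂ] H, Dense (T.domain : Set H) → IsSelfAdjoint T →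
      ∃! S : H →L[ℂ] H, IsSelfAdjoint S ∧ PureContraction S ∧ IsBoundedTransform T S) ∧
    (∀ S : H →L[ℂ] H, IsSelfAdjoint S → PureContraction S →
      ∃! T : H →ₗ.[ℂ] H, Dense (T.domain : Set H) ∧ IsSelfAdjoint T ∧
        IsBoundedTransform T S) ∧
    (∀ (T : H →ₗ.[ℂ] H) (S : H →L[ℂ] H), Dense (T.domain : Set H) → IsSelfAdjoint T →
      IsSelfAdjoint S → PureContraction S →
      (IsBoundedTransform T S ↔ IsInverseBoundedTransform S T)) := by
  refine ⟨fun T _ hT => ?_, fun S hS hp => ?_, fun T S _ hT _ _ =>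
    ⟨fun h => h.isInverseBoundedTransform hT, fun h => h.isBoundedTransform⟩⟩
  · obtain ⟨C, hC⟩ := hT.exists_isInvOneAddSq
    obtain ⟨S, hBT⟩ := hC.exists_isBoundedTransform hT
    have hinv := hBT.isInverseBoundedTransform hT
    exact ⟨S, ⟨hinv.isSelfAdjoint hT, hinv.pureContraction hT, hBT⟩,
      fun S' hS' => (hBT.unique hT hS'.2.2).symm⟩
  · obtain ⟨T, hd, hT, hinv⟩ := hp.exists_isInverseBoundedTransform hS
    exact ⟨T, ⟨hd, hT, hinv.isBoundedTransform⟩,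
      fun T' hT' => (hT'.2.2.isInverseBoundedTransform hT'.2.1).unique hinv⟩
end
end

section
/- Let T be a densely defined self-adjoint operator on a complex Hilbert space H with bounded transform S = T(I + T²)^{-1/2}. Then T is bounded if and only if σ(S) ⊆ (-1,1); equivalently, T is unbounded if and only if 1 ∈ σ(S) or -1 ∈ σ(S). -/
/-! Write `R = (I + T²)^{-1/2}`, so that `S = T R`. Symmetry of `T` gives `S⋆ R = R S` and
`S R = R S⋆`, so `S - S⋆` anticommutes with `R ≥ 0`; it therefore commutes with `R²`, hence with
its square root `R`, which forces `R (S - S⋆) = 0`, and `R` is injective. Thus `S` is self-adjoint,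
and `(I + T²) R² = I` gives `S² + R² = 1`, i.e. `‖S x‖² + ‖R x‖² = ‖x‖²`; in particular
`σ(S) ⊆ [-1, 1]`. If `‖T ψ‖ ≤ c ‖ψ‖`, then `‖S x‖ ≤ c ‖R x‖` forces `‖S‖ ≤ c / √(1 + c²) < 1`.
Conversely, if `±1 ∉ σ(S)` then `R² = (1 - S)(1 + S)` is invertible, so every `ψ` in the domain
is `R² φ` with `‖φ‖ ≤ C ‖ψ‖`, and `T ψ = S R φ`. -/

noncomputable section

variable {H : Type*} [NormedAddCommGroup H] [InnerProductSpace ℂ H] [CompleteSpace H]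

open scoped InnerProductSpace

theorem mul_eq_zero_of_mul_eq_neg_mul {A : Type*} [CStarAlgebra A] [PartialOrder A]
    [StarOrderedRing A] {a b : A} (ha : 0 ≤ a) (h : b * a = -(a * b)) : a * b = 0 := by
  have hsq : Commute (a * a) b := by
    simp only [Commute, SemiconjBy, mul_assoc, h, ← mul_assoc b, mul_neg, neg_mul, neg_neg]
  have hcomm : Commute a b := CFC.sqrt_mul_self a ▸ hsq.cfcₙ_nnreal _
  rw [← hcomm.eq] at h
  have h2 : (2 : ℂ) • (a * b) = 0 := by rw [two_smul]; nth_rw 1 [h]; exact neg_add_cancel _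
  exact (smul_eq_zero.mp h2).resolve_left two_ne_zero

theorem IsSelfAdjoint.spectrum_subset_ofReal_Ioo_iff {A : Type*} [CStarAlgebra A] {a : A}
    (ha : IsSelfAdjoint a) (hnorm : ‖a‖ ≤ 1) :
    spectrum ℂ a ⊆ Complex.ofReal '' Set.Ioo (-1) 1 ↔
      (1 : ℂ) ∉ spectrum ℂ a ∧ (-1 : ℂ) ∉ spectrum ℂ a := by
  rcases subsingleton_or_nontrivial A with hA | hA
  · simp [spectrum.of_subsingleton]
  refine ⟨fun h => ⟨fun h1 => ?_, fun h1 => ?_⟩, fun ⟨h1, h2⟩ z hz => ?_⟩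
  · obtain ⟨r, hr, hr1⟩ := h h1
    have : r = 1 := by exact_mod_cast hr1
    exact hr.2.ne this
  · obtain ⟨r, hr, hr1⟩ := h h1
    have : r = -1 := by exact_mod_cast hr1
    exact hr.1.ne' this
  have hz_re := ha.mem_spectrum_eq_re hz
  have hle : |z.re| ≤ 1 :=
    (Complex.abs_re_le_norm z).trans ((spectrum.norm_le_norm_of_mem hz).trans hnorm)
  refine ⟨z.re, ⟨(neg_le_of_abs_le hle).lt_of_ne fun h => h2 ?_,
    (le_of_abs_le hle).lt_of_ne fun h => h1 ?_⟩, hz_re.symm⟩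
  · rw [hz_re, ← h] at hz
    simpa using hz
  · rw [hz_re, h] at hz
    simpa using hz

namespace ContinuousLinearMap

theorem isSelfAdjoint_of_mul_eq_mul_star {S R : H →L[ℂ] H} (hR : 0 ≤ R)
    (hinj : Function.Injective R) (h₁ : star S * R = R * S) (h₂ : S * R = R * star S) :
    IsSelfAdjoint S := by
  have hanti : (S - star S) * R = -(R * (S - star S)) := by
    rw [sub_mul, mul_sub, h₁, h₂]; abel
  have hzero := mul_eq_zero_of_mul_eq_neg_mul hR hanti
  refine (sub_eq_zero.mp ?_).symm
  ext x
  exact hinj (by simpa using congr($hzero x))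

theorem norm_sq_add_norm_sq_of_adjoint_comp_add {𝕜 E F G : Type*} [RCLike 𝕜]
    [NormedAddCommGroup E] [NormedAddCommGroup F] [NormedAddCommGroup G] [InnerProductSpace 𝕜 E]
    [InnerProductSpace 𝕜 F] [InnerProductSpace 𝕜 G] [CompleteSpace E] [CompleteSpace F]
    [CompleteSpace G] {A : E →L[𝕜] F} {B : E →L[𝕜] G}
    (h : adjoint A ∘L A + adjoint B ∘L B = .id 𝕜 E) (x : E) :
    ‖A x‖ ^ 2 + ‖B x‖ ^ 2 = ‖x‖ ^ 2 := by
  rw [apply_norm_sq_eq_inner_adjoint_left, apply_norm_sq_eq_inner_adjoint_left, ← map_add,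
    ← inner_add_left, ← add_apply, h, id_apply, inner_self_eq_norm_sq]

theorem norm_lt_one_of_norm_sq_add_norm_sq {𝕜 E F G : Type*} [NontriviallyNormedField 𝕜]
    [SeminormedAddCommGroup E] [SeminormedAddCommGroup F] [SeminormedAddCommGroup G]
    [NormedSpace 𝕜 E] [NormedSpace 𝕜 F] [NormedSpace 𝕜 G] {A : E →L[𝕜] F} {B : E →L[𝕜] G} {c : ℝ}
    (hAB : ∀ x, ‖A x‖ ^ 2 + ‖B x‖ ^ 2 = ‖x‖ ^ 2) (hc : ∀ x, ‖A x‖ ≤ c * ‖B x‖) : ‖A‖ < 1 := by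
  have hc' : ∀ x, ‖A x‖ ≤ |c| * ‖B x‖ := fun x =>
    (hc x).trans (mul_le_mul_of_nonneg_right (le_abs_self c) (norm_nonneg _))
  have hsqrt : 0 < √(1 + c ^ 2) := by positivity
  have ht : |c| / √(1 + c ^ 2) < 1 := by
    rw [div_lt_one hsqrt, ← Real.sqrt_sq_eq_abs]
    exact Real.sqrt_lt_sqrt (sq_nonneg c) (by linarith)
  refine (opNorm_le_bound A (by positivity) fun x => ?_).trans_lt ht
  -- `‖A x‖² (1 + c²) ≤ c² ‖B x‖² + c² ‖A x‖² = c² ‖x‖²`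
  rw [div_mul_eq_mul_div, le_div_iff₀ hsqrt,
    ← pow_le_pow_iff_left₀ (by positivity) (by positivity) two_ne_zero, mul_pow, mul_pow,
    Real.sq_sqrt (by positivity), sq_abs, ← hAB x]
  nlinarith [mul_self_le_mul_self (norm_nonneg _) (hc' x), sq_abs c]

end ContinuousLinearMap

/-- `R` plays the role of `(I + T²)^{-1/2}`: `S = T R`, and `R²` is a right inverse of `I + T²`,
stated using `T R² = S R`. -/
structure IsBoundedTransformRoot (T : H →ₗ.[ℂ] H) (S R : H →L[ℂ] H) : Prop where
  nonneg : 0 ≤ R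
  eq_comp : ∀ x, ∃ hx : R x ∈ T.domain, S x = T ⟨R x, hx⟩
  inverse : ∀ x, ∃ hx : S (R x) ∈ T.domain, R (R x) + T ⟨S (R x), hx⟩ = x

omit [CompleteSpace H] in
theorem IsBoundedTransform.exists_isBoundedTransformRoot {T : H →ₗ.[ℂ] H} {S : H →L[ℂ] H}
    (h : IsBoundedTransform T S) : ∃ R, IsBoundedTransformRoot T S R := by
  obtain ⟨C, R, -, hR, hRC, hC, hS⟩ := h
  refine ⟨R, ⟨(ContinuousLinearMap.nonneg_iff_isPositive R).mpr hR, hS, fun x => ?_⟩⟩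
  obtain ⟨h₁, h₂, hx⟩ := hC x
  have hCx : C x = R (R x) := by rw [← hRC]; rfl
  obtain ⟨hRRx, hSRx⟩ := hS (R x)
  have hTC : (T ⟨C x, h₁⟩ : H) = S (R x) := by rw [hSRx]; exact congrArg T (Subtype.ext hCx)
  refine ⟨hTC ▸ h₂, ?_⟩
  rw [← hCx]
  convert hx using 3
  exact Subtype.ext hTC.symm

namespace IsBoundedTransformRoot

variable {T : H →ₗ.[ℂ] H} {S R : H →L[ℂ] H}

theorem isSelfAdjoint_root (h : IsBoundedTransformRoot T S R) : IsSelfAdjoint R :=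
  .of_nonneg h.nonneg

theorem inner_root_left (h : IsBoundedTransformRoot T S R) (x y : H) :
    ⟪R x, y⟫_ℂ = ⟪x, R y⟫_ℂ :=
  h.isSelfAdjoint_root.isSymmetric x y

omit [CompleteSpace H] in
theorem injective (h : IsBoundedTransformRoot T S R) : Function.Injective R := by
  refine (injective_iff_map_eq_zero R).mpr fun x hx => ?_
  obtain ⟨hmem, hxeq⟩ := h.inverse x
  have hzero : (⟨S (R x), hmem⟩ : T.domain) = 0 := Subtype.ext (by simp [hx])
  rw [← hxeq, hzero, hx, map_zero, LinearPMap.map_zero, add_zero]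

omit [CompleteSpace H] in
theorem inner_apply_root (h : IsBoundedTransformRoot T S R) (hT : T.IsFormalAdjoint T)
    (x y : H) : ⟪S x, R y⟫_ℂ = ⟪R x, S y⟫_ℂ := by
  obtain ⟨hx, hSx⟩ := h.eq_comp x
  obtain ⟨hy, hSy⟩ := h.eq_comp y
  rw [hSx, hSy]
  exact hT ⟨R x, hx⟩ ⟨R y, hy⟩

omit [CompleteSpace H] in
theorem inner_apply_root_apply (h : IsBoundedTransformRoot T S R) (hT : T.IsFormalAdjoint T)
    (x y : H) : ⟪S (R x), y⟫_ℂ = ⟪x, S (R y)⟫_ℂ := by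
  obtain ⟨hx, hxeq⟩ := h.inverse x
  obtain ⟨hy, hyeq⟩ := h.inverse y
  calc ⟪S (R x), y⟫_ℂ = ⟪S (R x), R (R y)⟫_ℂ + ⟪S (R x), T ⟨S (R y), hy⟩⟫_ℂ := by
        rw [← inner_add_right, hyeq]
    _ = ⟪R (R x), S (R y)⟫_ℂ + ⟪T ⟨S (R x), hx⟩, S (R y)⟫_ℂ := by
        rw [h.inner_apply_root hT, hT ⟨_, hx⟩ ⟨_, hy⟩]
    _ = ⟪x, S (R y)⟫_ℂ := by rw [← inner_add_left, hxeq]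

theorem star_mul_root (h : IsBoundedTransformRoot T S R) (hT : T.IsFormalAdjoint T) :
    star S * R = R * S := by
  ext x
  refine ext_inner_left ℂ fun v => ?_
  rw [mul_apply_eq_comp, mul_apply_eq_comp, ContinuousLinearMap.star_eq_adjoint,
    ContinuousLinearMap.adjoint_inner_right, h.inner_apply_root hT, h.inner_root_left]

theorem mul_root (h : IsBoundedTransformRoot T S R) (hT : T.IsFormalAdjoint T) :
    S * R = R * star S := by
  ext x
  refine ext_inner_left ℂ fun v => ?_
  rw [mul_apply_eq_comp, mul_apply_eq_comp, ← h.inner_root_left,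
    ContinuousLinearMap.star_eq_adjoint, ContinuousLinearMap.adjoint_inner_right,
    h.inner_apply_root_apply hT]

theorem isSelfAdjoint (h : IsBoundedTransformRoot T S R) (hT : T.IsFormalAdjoint T) :
    IsSelfAdjoint S :=
  ContinuousLinearMap.isSelfAdjoint_of_mul_eq_mul_star h.nonneg h.injective
    (h.star_mul_root hT) (h.mul_root hT)

theorem star_mul_self_add_star_mul_self (h : IsBoundedTransformRoot T S R)
    (hT : T.IsFormalAdjoint T) : star S * S + star R * R = 1 := by
  set M := star S * S + star R * R
  have hMR : M * R = R := by
    ext y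
    refine ext_inner_left ℂ fun z => ?_
    obtain ⟨hy, hyeq⟩ := h.inverse y
    obtain ⟨hz, hSz⟩ := h.eq_comp z
    calc ⟪z, (M * R) y⟫_ℂ = ⟪S z, S (R y)⟫_ℂ + ⟪R z, R (R y)⟫_ℂ := by
          simp only [M, mul_apply_eq_comp, add_apply, inner_add_right,
            ContinuousLinearMap.star_eq_adjoint, ContinuousLinearMap.adjoint_inner_right]
      _ = ⟪R z, T ⟨S (R y), hy⟩⟫_ℂ + ⟪R z, R (R y)⟫_ℂ := by rw [hSz, hT ⟨R z, hz⟩ ⟨_, hy⟩]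
      _ = ⟪z, R y⟫_ℂ := by rw [add_comm, ← inner_add_right, hyeq, h.inner_root_left]
  have hRM : R * M = R := by
    simpa [M, h.isSelfAdjoint_root.star_eq] using congr(star $hMR)
  ext x
  exact h.injective (by simpa using congr($hRM x))

theorem norm_sq_add_norm_sq (h : IsBoundedTransformRoot T S R) (hT : T.IsFormalAdjoint T)
    (x : H) : ‖S x‖ ^ 2 + ‖R x‖ ^ 2 = ‖x‖ ^ 2 :=
  ContinuousLinearMap.norm_sq_add_norm_sq_of_adjoint_comp_add
    (h.star_mul_self_add_star_mul_self hT) x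

theorem norm_le_one (h : IsBoundedTransformRoot T S R) (hT : T.IsFormalAdjoint T) :
    ‖S‖ ≤ 1 :=
  ContinuousLinearMap.opNorm_le_bound S zero_le_one fun x => by
    rw [one_mul, ← pow_le_pow_iff_left₀ (norm_nonneg _) (norm_nonneg _) two_ne_zero,
      ← h.norm_sq_add_norm_sq hT x]
    exact le_add_of_nonneg_right (sq_nonneg _)

theorem norm_lt_one_of_bounded (h : IsBoundedTransformRoot T S R) (hT : T.IsFormalAdjoint T)
    (hb : ∃ c : ℝ, ∀ ψ : T.domain, ‖T ψ‖ ≤ c * ‖(ψ : H)‖) : ‖S‖ < 1 := by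
  obtain ⟨c, hc⟩ := hb
  refine ContinuousLinearMap.norm_lt_one_of_norm_sq_add_norm_sq (h.norm_sq_add_norm_sq hT)
    (c := c) fun x => ?_
  obtain ⟨hx, hSx⟩ := h.eq_comp x
  rw [hSx]
  exact hc ⟨R x, hx⟩

omit [CompleteSpace H] in
theorem bounded_of_isUnit (h : IsBoundedTransformRoot T S R) (hu : IsUnit (R * R)) :
    ∃ c : ℝ, ∀ ψ : T.domain, ‖T ψ‖ ≤ c * ‖(ψ : H)‖ := by
  obtain ⟨u, hu⟩ := hu
  set B : H →L[ℂ] H := ↑u⁻¹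
  refine ⟨‖S‖ * ‖R‖ * ‖B‖, fun ψ => ?_⟩
  have hψ : (ψ : H) = R (R (B ψ)) := by
    rw [← mul_apply_eq_comp, ← hu, ← mul_apply_eq_comp, u.mul_inv, one_apply_eq_self]
  obtain ⟨hmem, hSx⟩ := h.eq_comp (R (B ψ))
  have hTψ : T ψ = S (R (B ψ)) := by rw [hSx]; exact congrArg T (Subtype.ext hψ)
  calc ‖T ψ‖ = ‖S (R (B ψ))‖ := by rw [hTψ]
    _ ≤ ‖S‖ * (‖R‖ * (‖B‖ * ‖(ψ : H)‖)) :=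
        S.le_opNorm_of_le (R.le_opNorm_of_le (B.le_opNorm _))
    _ = ‖S‖ * ‖R‖ * ‖B‖ * ‖(ψ : H)‖ := by ring

theorem bounded_iff (h : IsBoundedTransformRoot T S R) (hT : T.IsFormalAdjoint T) :
    (∃ c : ℝ, ∀ ψ : T.domain, ‖T ψ‖ ≤ c * ‖(ψ : H)‖) ↔
      (1 : ℂ) ∉ spectrum ℂ S ∧ (-1 : ℂ) ∉ spectrum ℂ S := by
  constructor
  · intro hb
    have hσ : ∀ z ∈ spectrum ℂ S, ‖z‖ < 1 := fun z hz =>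
      ((spectrum.norm_le_norm_mul_of_mem hz).trans (mul_le_of_le_one_right (norm_nonneg _)
        (ContinuousLinearMap.norm_id_le))).trans_lt (h.norm_lt_one_of_bounded hT hb)
    exact ⟨fun h1 => by simpa using hσ 1 h1, fun h1 => by simpa using hσ _ h1⟩
  · rintro ⟨h1, h2⟩
    have hRR : R * R = (1 - S) * (1 + S) := by
      have h' := h.star_mul_self_add_star_mul_self hT
      rw [(h.isSelfAdjoint hT).star_eq, h.isSelfAdjoint_root.star_eq] at h'
      rw [eq_sub_of_add_eq' h']
      noncomm_ring
    have hu₁ : IsUnit (1 - S) := by simpa using spectrum.notMem_iff.mp h1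
    have hu₂ : IsUnit (1 + S) := by
      have := spectrum.notMem_iff.mp h2
      rwa [map_neg, map_one, ← neg_add', IsUnit.neg_iff] at this
    exact h.bounded_of_isUnit (hRR ▸ hu₁.mul hu₂)

end IsBoundedTransformRoot

theorem bounded_iff_spectrum_boundedTransform_subset_general (T : H →ₗ.[ℂ] H) (S : H →L[ℂ] H)
    (hsa : IsSelfAdjoint T) (hbt : IsBoundedTransform T S) :
    ((∃ c : ℝ, ∀ ψ : T.domain, ‖T ψ‖ ≤ c * ‖(ψ : H)‖) ↔
      spectrum ℂ S ⊆ Complex.ofReal '' Set.Ioo (-1 : ℝ) 1) ∧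
    (¬ (∃ c : ℝ, ∀ ψ : T.domain, ‖T ψ‖ ≤ c * ‖(ψ : H)‖) ↔
      ((1 : ℂ) ∈ spectrum ℂ S ∨ (-1 : ℂ) ∈ spectrum ℂ S)) := by
  obtain ⟨R, hR⟩ := hbt.exists_isBoundedTransformRoot
  have hT : T.IsFormalAdjoint T := by
    simpa only [LinearPMap.isSelfAdjoint_def.mp hsa] using
      LinearPMap.adjoint_isFormalAdjoint hsa.dense_domain
  rw [(hR.isSelfAdjoint hT).spectrum_subset_ofReal_Ioo_iff (hR.norm_le_one hT),
    hR.bounded_iff hT]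
  tauto

/-- `T` is bounded iff `σ(S) ⊆ (-1,1)`; equivalently, `T` is unbounded iff
`1 ∈ σ(S)` or `-1 ∈ σ(S)`. -/
theorem bounded_iff_spectrum_boundedTransform_subset (T : H →ₗ.[ℂ] H) (S : H →L[ℂ] H)
    (hdense : Dense (T.domain : Set H)) (hsa : IsSelfAdjoint T)
    (hbt : IsBoundedTransform T S) :
    ((∃ c : ℝ, ∀ ψ : T.domain, ‖T ψ‖ ≤ c * ‖(ψ : H)‖) ↔
      spectrum ℂ S ⊆ Complex.ofReal '' Set.Ioo (-1 : ℝ) 1) ∧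
    (¬ (∃ c : ℝ, ∀ ψ : T.domain, ‖T ψ‖ ≤ c * ‖(ψ : H)‖) ↔
      ((1 : ℂ) ∈ spectrum ℂ S ∨ (-1 : ℂ) ∈ spectrum ℂ S)) :=
  bounded_iff_spectrum_boundedTransform_subset_general T S hsa hbt
end
end

section
/- Let T be a densely defined self-adjoint operator on a complex Hilbert space H with bounded transform S = T(I + T²)^{-1/2}. The bounded transform preserves point spectra: λ ∈ ℝ is an eigenvalue of T if and only if λ(1 + λ²)^{-1/2} is an eigenvalue of S; moreover every eigenvalue of S lies in (-1,1). -/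
noncomputable section

variable {H : Type*} [NormedAddCommGroup H] [InnerProductSpace ℂ H] [CompleteSpace H]

open scoped InnerProductSpace ComplexConjugate

/-!
Everything is read on the graph of `T`. The operator `C = (1 + T²)⁻¹` satisfies `C T ⊆ T C`, and
with `S = T R`, `R² = C`, symmetry of `T` gives `S* S + C = 1` and `S C = C S`. Hence an eigenvector
`ψ` of `S` for `μ` is an eigenvector of `C` for `1 - |μ|² > 0`, so of `R` for `√(1 - |μ|²)`; then
`ψ = R ψ / √(1 - |μ|²)` lies in the domain of `T` and is an eigenvector of `T`, for a real eigenvalue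
since `T` is symmetric. Conversely an eigenvector of `T` for `λ` is one of `C` for `(1 + λ²)⁻¹`,
hence of `R` for `(1 + λ²)^{-1/2}` and of `S = T R` for `λ (1 + λ²)^{-1/2}`. The function
`λ ↦ λ (1 + λ²)^{-1/2}` takes values in `(-1, 1)` and is injective, with left inverse `uFun`.
-/

lemma uFun_div_sqrt_one_add_sq (a : ℝ) : uFun (a / √(1 + a ^ 2)) = a := by
  have hs : 0 < √(1 + a ^ 2) := Real.sqrt_pos.2 (by positivity)
  have hs2 : √(1 + a ^ 2) ^ 2 = 1 + a ^ 2 := Real.sq_sqrt (by positivity)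
  have h : 1 - (a / √(1 + a ^ 2)) ^ 2 = (√(1 + a ^ 2))⁻¹ ^ 2 := by
    field_simp
    linarith
  rw [uFun, h, Real.sqrt_sq (inv_nonneg.2 hs.le)]
  field_simp

lemma abs_div_sqrt_one_add_sq_lt_one (a : ℝ) : |a / √(1 + a ^ 2)| < 1 := by
  have hs : 0 < √(1 + a ^ 2) := Real.sqrt_pos.2 (by positivity)
  rw [abs_div, abs_of_pos hs, div_lt_one hs, ← Real.sqrt_sq_eq_abs]
  exact Real.sqrt_lt_sqrt (sq_nonneg a) (by linarith)

section

variable {𝕜 E : Type*} [RCLike 𝕜] [NormedAddCommGroup E] [InnerProductSpace 𝕜 E]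
  {T : E →ₗ.[𝕜] E} {S C R : E →L[𝕜] E}

namespace LinearPMap

lemma IsFormalAdjoint.inner_eq_of_mem_graph (hT : T.IsFormalAdjoint T) {x y a b : E}
    (hx : (x, a) ∈ T.graph) (hy : (y, b) ∈ T.graph) : ⟪a, y⟫_𝕜 = ⟪x, b⟫_𝕜 := by
  obtain ⟨x', rfl, rfl⟩ := T.mem_graph_iff.1 hx
  obtain ⟨y', rfl, rfl⟩ := T.mem_graph_iff.1 hy
  exact hT x' y'

/-- `1 + T²` is injective for symmetric `T`. -/
lemma IsFormalAdjoint.eq_zero_of_mem_graph_of_mem_graph_neg (hT : T.IsFormalAdjoint T)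
    {x y : E} (hxy : (x, y) ∈ T.graph) (hyx : (y, -x) ∈ T.graph) : x = 0 := by
  have h : ⟪y, y⟫_𝕜 = -⟪x, x⟫_𝕜 := by
    rw [hT.inner_eq_of_mem_graph hxy hyx, inner_neg_right]
  have h' : ‖y‖ ^ 2 = -‖x‖ ^ 2 := by
    simpa only [inner_self_eq_norm_sq_to_K, ← RCLike.ofReal_pow, ← RCLike.ofReal_neg,
      RCLike.ofReal_inj] using h
  have hx : ‖x‖ = 0 := by nlinarith [sq_nonneg ‖x‖, sq_nonneg ‖y‖, norm_nonneg x]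
  exact norm_eq_zero.1 hx

lemma IsFormalAdjoint.conj_eq_of_mem_graph_smul (hT : T.IsFormalAdjoint T) {x : E}
    (hx : x ≠ 0) {c : 𝕜} (h : (x, c • x) ∈ T.graph) : conj c = c := by
  have h' := hT.inner_eq_of_mem_graph h h
  rw [inner_smul_left, inner_smul_right] at h'
  exact mul_right_cancel₀ (inner_self_ne_zero.2 hx) h'

end LinearPMap

namespace ContinuousLinearMap

lemma IsPositive.nonneg_of_apply_eq_smul (hR : R.IsPositive) {c : ℝ} {v : E} (hv0 : v ≠ 0)
    (hv : R v = (c : 𝕜) • v) : 0 ≤ c := by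
  have h := hR.re_inner_nonneg_left v
  rw [hv, inner_smul_real_left, RCLike.smul_re, inner_self_eq_norm_sq] at h
  exact nonneg_of_mul_nonneg_left h (by positivity)

lemma IsPositive.apply_eq_sqrt_smul (hR : R.IsPositive) {b : ℝ} (hb : 0 < b) {v : E}
    (hv : R (R v) = (b : 𝕜) • v) : R v = (√b : 𝕜) • v := by
  have hsq : (b : 𝕜) = (√b : 𝕜) * (√b : 𝕜) := by
    rw [← RCLike.ofReal_mul, Real.mul_self_sqrt hb.le]
  have hw : R (R v - (√b : 𝕜) • v) = ((-√b : ℝ) : 𝕜) • (R v - (√b : 𝕜) • v) := by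
    rw [map_sub, map_smul, hv, hsq, RCLike.ofReal_neg]
    module
  by_contra hne
  have := hR.nonneg_of_apply_eq_smul (sub_ne_zero.2 hne) hw
  linarith [Real.sqrt_pos.2 hb]

lemma apply_eq_smul_of_adjoint_mul_self_add_eq_one [CompleteSpace E]
    (h : adjoint S * S + C = 1) (hSC : Commute S C) {μ : 𝕜} {ψ : E} (hψ : S ψ = μ • ψ) :
    C ψ = ((1 - ‖μ‖ ^ 2 : ℝ) : 𝕜) • ψ := by
  set β : 𝕜 := ((1 - ‖μ‖ ^ 2 : ℝ) : 𝕜) with hβ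
  have hC : ∀ w, S w = μ • w → ⟪C ψ, w⟫_𝕜 = β * ⟪ψ, w⟫_𝕜 := by
    intro w hw
    have h' := congrArg (fun A => ⟪A ψ, w⟫_𝕜) h
    simp only [add_apply, mul_apply_eq_comp, one_apply_eq_self, inner_add_left,
      adjoint_inner_left, hψ, hw, inner_smul_left, inner_smul_right] at h'
    rw [hβ]
    push_cast
    linear_combination h' - ⟪ψ, w⟫_𝕜 * RCLike.conj_mul μ
  -- `C` preserves the `μ`-eigenspace of `S`, on which it acts as `β` in the weak sense
  set w := C ψ - β • ψ
  have hw : S w = μ • w := by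
    have hSCψ : S (C ψ) = C (S ψ) := congrArg (· ψ) hSC.eq
    simp only [w, map_sub, map_smul, hSCψ, hψ]
    module
  have hww : ⟪w, w⟫_𝕜 = 0 := by
    rw [inner_sub_left, hC w hw, inner_smul_left, hβ, RCLike.conj_ofReal, sub_self]
  exact sub_eq_zero.1 (inner_self_eq_zero.1 hww)

end ContinuousLinearMap

def IsRightInverseOneAddSq (T : E →ₗ.[𝕜] E) (C : E →L[𝕜] E) : Prop :=
  ∀ x, ∃ y, (C x, y) ∈ T.graph ∧ (y, x - C x) ∈ T.graph

namespace IsRightInverseOneAddSq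

lemma injective (hC : IsRightInverseOneAddSq T C) : Function.Injective C := by
  refine (injective_iff_map_eq_zero C).2 fun x hx => ?_
  obtain ⟨y, hxy, hy⟩ := hC x
  rw [T.graph_fst_eq_zero_snd hxy hx, hx, sub_zero] at hy
  exact T.graph_fst_eq_zero_snd hy rfl

/-- `C T ⊆ T C`. -/
lemma mem_graph (hC : IsRightInverseOneAddSq T C) (hT : T.IsFormalAdjoint T) {x a : E}
    (hx : (x, a) ∈ T.graph) : (C x, C a) ∈ T.graph := by
  obtain ⟨y, hxy, hy⟩ := hC x
  obtain ⟨z, haz, hz⟩ := hC a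
  -- `w := C a - T (C x)` satisfies `T (T w) = -w`
  have h₁ : (C a - y, z - (x - C x)) ∈ T.graph := T.graph.sub_mem haz hy
  have h₂ : (z - (x - C x), -(C a - y)) ∈ T.graph := by
    convert T.graph.sub_mem hz (T.graph.sub_mem hx hxy) using 1
    simp only [Prod.mk_sub_mk, Prod.mk.injEq, true_and]
    abel
  rwa [← sub_eq_zero.1 (hT.eq_zero_of_mem_graph_of_mem_graph_neg h₁ h₂)] at hxy

lemma apply_eq_of_mem_graph_smul (hC : IsRightInverseOneAddSq T C) (hT : T.IsFormalAdjoint T)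
    {lam : ℝ} {ψ : E} (hψ : (ψ, (lam : 𝕜) • ψ) ∈ T.graph) :
    C ψ = (((1 + lam ^ 2)⁻¹ : ℝ) : 𝕜) • ψ := by
  obtain ⟨y, hψy, hy⟩ := hC ψ
  have hCψ : (C ψ, (lam : 𝕜) • C ψ) ∈ T.graph := by simpa only [map_smul] using hC.mem_graph hT hψ
  rw [T.mem_graph_snd_inj hψy hCψ rfl] at hy
  have hsq : ψ - C ψ = (lam : 𝕜) • (lam : 𝕜) • C ψ :=
    T.mem_graph_snd_inj hy (T.graph.smul_mem (lam : 𝕜) hCψ) rfl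
  have hψ' : ψ = ((1 + lam ^ 2 : ℝ) : 𝕜) • C ψ := by
    push_cast
    linear_combination (norm := module) hsq
  have hpos : (1 + lam ^ 2 : ℝ) ≠ 0 := by positivity
  rw [RCLike.ofReal_inv, eq_comm, inv_smul_eq_iff₀ (RCLike.ofReal_ne_zero.2 hpos)]
  exact hψ'

end IsRightInverseOneAddSq

lemma commute_of_mem_graph (hT : T.IsFormalAdjoint T) (hC : IsRightInverseOneAddSq T C)
    (hRR : R * R = C) (hS : ∀ x, (R x, S x) ∈ T.graph) : Commute S C := by
  ext x
  have hRC : R (C x) = C (R x) := by rw [← hRR, mul_apply_eq_comp, mul_apply_eq_comp]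
  exact T.mem_graph_snd_inj (hS (C x)) (hC.mem_graph hT (hS x)) hRC

lemma inner_add_inner_eq_inner_of_mem_graph (hT : T.IsFormalAdjoint T)
    (hC : IsRightInverseOneAddSq T C) (hR : R.IsPositive) (hRR : R * R = C)
    (hS : ∀ x, (R x, S x) ∈ T.graph) (x z : E) :
    ⟪S x, S (R z)⟫_𝕜 + ⟪C x, R z⟫_𝕜 = ⟪x, R z⟫_𝕜 := by
  obtain ⟨y, hzy, hy⟩ := hC z
  have hRR' : ∀ v, R (R v) = C v := fun v => by rw [← hRR, mul_apply_eq_comp]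
  have hSRz : S (R z) = y := T.mem_graph_snd_inj (hS (R z)) hzy (hRR' z)
  have hCx : ⟪C x, R z⟫_𝕜 = ⟪R x, C z⟫_𝕜 := by
    rw [← hRR' x, ← hRR' z]
    exact hR.inner_left_eq_inner_right _ _
  rw [hSRz, hT.inner_eq_of_mem_graph (hS x) hy, hCx, inner_sub_right,
    ← hR.inner_left_eq_inner_right, sub_add_cancel]

lemma adjoint_mul_self_add_eq_one [CompleteSpace E] (hT : T.IsFormalAdjoint T)
    (hC : IsRightInverseOneAddSq T C) (hR : R.IsPositive) (hRR : R * R = C)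
    (hS : ∀ x, (R x, S x) ∈ T.graph) : ContinuousLinearMap.adjoint S * S + C = 1 := by
  ext x
  set v := ContinuousLinearMap.adjoint S (S x) + C x - x
  have hRv : R v = 0 := by
    refine ext_inner_right 𝕜 fun z => ?_
    rw [hR.inner_left_eq_inner_right, inner_zero_left, inner_sub_left, inner_add_left,
      ContinuousLinearMap.adjoint_inner_left,
      inner_add_inner_eq_inner_of_mem_graph hT hC hR hRR hS, sub_self]
  have hCv : C v = C 0 := by rw [← hRR, mul_apply_eq_comp, hRv, map_zero, map_zero]
  exact sub_eq_zero.1 (hC.injective hCv)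

lemma apply_eq_of_mem_graph_smul (hT : T.IsFormalAdjoint T) (hC : IsRightInverseOneAddSq T C)
    (hR : R.IsPositive) (hRR : R * R = C) (hS : ∀ x, (R x, S x) ∈ T.graph) {lam : ℝ} {ψ : E}
    (hψ : (ψ, (lam : 𝕜) • ψ) ∈ T.graph) : S ψ = ((lam / √(1 + lam ^ 2) : ℝ) : 𝕜) • ψ := by
  have hRψ : R ψ = (√(1 + lam ^ 2)⁻¹ : 𝕜) • ψ := by
    refine hR.apply_eq_sqrt_smul (by positivity) ?_
    rw [← hC.apply_eq_of_mem_graph_smul hT hψ, ← hRR, mul_apply_eq_comp]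
  have h : ((√(1 + lam ^ 2)⁻¹ : 𝕜) • ψ, (√(1 + lam ^ 2)⁻¹ : 𝕜) • (lam : 𝕜) • ψ) ∈ T.graph :=
    T.graph.smul_mem _ hψ
  rw [T.mem_graph_snd_inj (hS ψ) h hRψ, smul_smul, ← RCLike.ofReal_mul, Real.sqrt_inv,
    inv_mul_eq_div]

lemma exists_mem_graph_of_apply_eq_smul [CompleteSpace E] (hT : T.IsFormalAdjoint T)
    (hC : IsRightInverseOneAddSq T C) (hCpos : C.IsPositive) (hR : R.IsPositive)
    (hRR : R * R = C) (hS : ∀ x, (R x, S x) ∈ T.graph) {μ : 𝕜} {ψ : E} (hψ0 : ψ ≠ 0)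
    (hψ : S ψ = μ • ψ) :
    ∃ ν : ℝ, (ψ, (ν : 𝕜) • ψ) ∈ T.graph ∧ μ = ((ν / √(1 + ν ^ 2) : ℝ) : 𝕜) := by
  set β : ℝ := 1 - ‖μ‖ ^ 2
  have hCψ : C ψ = (β : 𝕜) • ψ :=
    ContinuousLinearMap.apply_eq_smul_of_adjoint_mul_self_add_eq_one
      (adjoint_mul_self_add_eq_one hT hC hR hRR hS) (commute_of_mem_graph hT hC hRR hS) hψ
  have hβ : 0 < β := by
    refine (hCpos.nonneg_of_apply_eq_smul hψ0 hCψ).lt_of_ne fun h => hψ0 (hC.injective ?_)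
    rw [hCψ, ← h, RCLike.ofReal_zero, zero_smul, map_zero]
  have hRψ : R ψ = (√β : 𝕜) • ψ :=
    hR.apply_eq_sqrt_smul hβ (by rw [← hCψ, ← hRR, mul_apply_eq_comp])
  have hsqrt : (√β : 𝕜) ≠ 0 := RCLike.ofReal_ne_zero.2 (Real.sqrt_pos.2 hβ).ne'
  have hc : (ψ, ((√β : 𝕜)⁻¹ * μ) • ψ) ∈ T.graph := by
    have h := T.graph.smul_mem (√β : 𝕜)⁻¹ (hS ψ)
    rwa [hRψ, hψ, Prod.smul_mk, smul_smul, inv_mul_cancel₀ hsqrt, one_smul, smul_smul] at h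
  obtain ⟨ν, hν⟩ := RCLike.conj_eq_iff_real.1 (hT.conj_eq_of_mem_graph_smul hψ0 hc)
  rw [hν] at hc
  refine ⟨ν, hc, smul_left_injective 𝕜 hψ0 ?_⟩
  simp only [← hψ, apply_eq_of_mem_graph_smul hT hC hR hRR hS hc]

end

lemma IsBoundedTransform.exists_isRightInverseOneAddSq {E : Type*} [NormedAddCommGroup E]
    [InnerProductSpace ℂ E] {T : E →ₗ.[ℂ] E} {S : E →L[ℂ] E}
    (hbt : IsBoundedTransform T S) :
    ∃ C R : E →L[ℂ] E, IsRightInverseOneAddSq T C ∧ C.IsPositive ∧ R.IsPositive ∧ R * R = C ∧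
      ∀ x, (R x, S x) ∈ T.graph := by
  obtain ⟨C, R, hCpos, hR, hRR, hC, hS⟩ := hbt
  refine ⟨C, R, fun x => ?_, hCpos, hR, hRR, fun x => ?_⟩
  · obtain ⟨h₁, h₂, hx⟩ := hC x
    exact ⟨_, T.mem_graph ⟨C x, h₁⟩, (LinearPMap.image_iff h₂).1 (eq_sub_of_add_eq' hx).symm⟩
  · obtain ⟨hx, hSx⟩ := hS x
    exact (LinearPMap.image_iff hx).1 hSx

theorem pointSpectrum_boundedTransform_general (T : H →ₗ.[ℂ] H) (S : H →L[ℂ] H)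
    (hsa : IsSelfAdjoint T)
    (hbt : IsBoundedTransform T S) :
    (∀ lam : ℝ,
      (∃ ψ : T.domain, (ψ : H) ≠ 0 ∧ T ψ = (lam : ℂ) • (ψ : H)) ↔
      (∃ ψ : H, ψ ≠ 0 ∧ S ψ = (((lam / Real.sqrt (1 + lam ^ 2) : ℝ)) : ℂ) • ψ)) ∧
    (∀ μ : ℂ, (∃ ψ : H, ψ ≠ 0 ∧ S ψ = μ • ψ) →
      ∃ r : ℝ, μ = (r : ℂ) ∧ -1 < r ∧ r < 1) := by
  obtain ⟨C, R, hC, hCpos, hR, hRR, hS⟩ := hbt.exists_isRightInverseOneAddSq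
  have hT : T.IsFormalAdjoint T := by
    simpa only [LinearPMap.isSelfAdjoint_def.1 hsa] using
      LinearPMap.adjoint_isFormalAdjoint hsa.dense_domain
  refine ⟨fun lam => ⟨?_, ?_⟩, ?_⟩
  · rintro ⟨ψ, hψ0, hTψ⟩
    exact ⟨ψ, hψ0, apply_eq_of_mem_graph_smul hT hC hR hRR hS (hTψ ▸ T.mem_graph ψ)⟩
  · rintro ⟨ψ, hψ0, hψ⟩
    obtain ⟨ν, hν, hμ⟩ := exists_mem_graph_of_apply_eq_smul hT hC hCpos hR hRR hS hψ0 hψ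
    have hμ' : lam / √(1 + lam ^ 2) = ν / √(1 + ν ^ 2) := RCLike.ofReal_injective (K := ℂ) hμ
    obtain rfl : lam = ν := by
      simpa only [uFun_div_sqrt_one_add_sq] using congrArg uFun hμ'
    exact ⟨⟨ψ, T.mem_domain_of_mem_graph hν⟩, hψ0, ((LinearPMap.image_iff _).2 hν).symm⟩
  · rintro μ ⟨ψ, hψ0, hψ⟩
    obtain ⟨ν, -, hμ⟩ := exists_mem_graph_of_apply_eq_smul hT hC hCpos hR hRR hS hψ0 hψ
    exact ⟨_, hμ, abs_lt.1 (abs_div_sqrt_one_add_sq_lt_one ν)⟩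

/-- The bounded transform preserves point spectra: a real `λ` is an eigenvalue of `T` iff
`λ(1 + λ²)^{-1/2}` is an eigenvalue of `S`; moreover every eigenvalue of `S` lies in `(-1,1)`
(in particular it is real). -/
theorem pointSpectrum_boundedTransform (T : H →ₗ.[ℂ] H) (S : H →L[ℂ] H)
    (hdense : Dense (T.domain : Set H)) (hsa : IsSelfAdjoint T)
    (hbt : IsBoundedTransform T S) :
    (∀ lam : ℝ,
      (∃ ψ : T.domain, (ψ : H) ≠ 0 ∧ T ψ = (lam : ℂ) • (ψ : H)) ↔
      (∃ ψ : H, ψ ≠ 0 ∧ S ψ = (((lam / Real.sqrt (1 + lam ^ 2) : ℝ)) : ℂ) • ψ)) ∧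
    (∀ μ : ℂ, (∃ ψ : H, ψ ≠ 0 ∧ S ψ = μ • ψ) →
      ∃ r : ℝ, μ = (r : ℂ) ∧ -1 < r ∧ r < 1) :=
  pointSpectrum_boundedTransform_general T S hsa hbt
end
end

section
/- Let T be a densely defined self-adjoint operator on a complex Hilbert space H with bounded transform S = T(I + T²)^{-1/2}. Then W*(T) = W*(S), where W*(T) = {T}'' is the bicommutant of the set of bounded operators commuting with T, and W*(S) is the von Neumann algebra generated by S and the identity. -/
noncomputable section

variable {H : Type*} [NormedAddCommGroup H] [InnerProductSpace ℂ H] [CompleteSpace H]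

/-!
Let `C = (1 + T²)⁻¹` and `R = √C`, so that `S = TR`. Since `T` is closed and self-adjoint, the
bounded operators `B` with `TB ⊂ BT` form a norm-closed *-algebra `{T}'`; it contains `C`, hence
`R`. From `S² = 1 - C = 1 - R²` one gets that the graph of `T` is exactly `{(Rw, Sw) | w ∈ H}`
(take `w = Rx + STx`). So `B ∈ {T}'` iff `B` commutes with `R` and `S`, and commuting with `S`
already forces commuting with `C = 1 - S²`, hence with `R = √C`. Thus `{T}' = {S}'`, which is the
commutant of `C*(S)` because `S` is self-adjoint; taking commutants once more gives the theorem.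
-/

open scoped LinearPMap InnerProductSpace

theorem cfc_sqrt_eq_of_mul_self_eq {A : Type*} [CStarAlgebra A] [PartialOrder A]
    [StarOrderedRing A] {a b : A} (hb : 0 ≤ b) (h : b * b = a) : cfc Real.sqrt a = b := by
  have ha : 0 ≤ a := h ▸ (IsSelfAdjoint.of_nonneg hb).mul_self_nonneg
  rw [← cfcₙ_eq_cfc, ← CFC.sqrt_eq_real_sqrt a ha, CFC.sqrt_unique h hb]

theorem IsSelfAdjoint.centralizer_elemental {R A : Type*} [CommSemiring R] [StarRing R]
    [TopologicalSpace A] [Semiring A] [StarRing A] [IsSemitopologicalSemiring A] [ContinuousStar A]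
    [Algebra R A] [StarModule R A] [T2Space A] {a : A} (ha : IsSelfAdjoint a) :
    Set.centralizer (StarAlgebra.elemental R a : Set A) = Set.centralizer {a} := by
  refine subset_antisymm (Set.centralizer_subset (by simp)) fun b hb c hc => ?_
  have hab : a * b = b * a := Set.mem_centralizer_iff.1 hb a rfl
  have hb' : b ∈ StarSubalgebra.centralizer R {a} := by
    simpa [StarSubalgebra.mem_centralizer_iff, ha.star_eq] using hab
  exact ((StarSubalgebra.mem_centralizer_iff R).1
    (StarAlgebra.elemental.le_centralizer_centralizer R a hc) b hb').1.symm

section Graph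

omit [CompleteSpace H]

def pmapCommutant (T : H →ₗ.[ℂ] H) : Subalgebra ℂ (H →L[ℂ] H) where
  carrier := {A | ∀ p ∈ T.graph, (A p.1, A p.2) ∈ T.graph}
  mul_mem' hA hB p hp := hA _ (hB p hp)
  one_mem' _ hp := hp
  add_mem' hA hB p hp := T.graph.add_mem (hA p hp) (hB p hp)
  zero_mem' _ _ := T.graph.zero_mem
  algebraMap_mem' r _ hp := T.graph.smul_mem r hp

theorem mem_pmapCommutant {T : H →ₗ.[ℂ] H} {A : H →L[ℂ] H} :
    A ∈ pmapCommutant T ↔ CommutesPMap T A := by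
  constructor
  · intro hA ψ
    obtain ⟨⟨φ, hφ⟩, rfl, hTφ⟩ := T.mem_graph_iff.1 (hA _ (T.mem_graph ψ))
    exact ⟨hφ, hTφ⟩
  · rintro hA ⟨x, y⟩ hp
    obtain ⟨ψ, rfl, rfl⟩ := T.mem_graph_iff.1 hp
    obtain ⟨hψ, hTψ⟩ := hA ψ
    exact T.mem_graph_iff.2 ⟨⟨A ψ, hψ⟩, rfl, hTψ⟩

theorem isClosed_pmapCommutant {T : H →ₗ.[ℂ] H} (hT : T.IsClosed) :
    IsClosed (pmapCommutant T : Set (H →L[ℂ] H)) := by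
  have : (pmapCommutant T : Set (H →L[ℂ] H)) =
      ⋂ p ∈ T.graph, (fun A : H →L[ℂ] H => (A p.1, A p.2)) ⁻¹' T.graph := by
    ext A; simp [pmapCommutant]
  rw [this]
  exact isClosed_biInter fun p _ => hT.preimage (by fun_prop)

/-- `C` maps into `D(T²)` and `(1 + T²) C = 1`. -/
def IsOneAddSqRightInverse (T : H →ₗ.[ℂ] H) (C : H →L[ℂ] H) : Prop :=
  ∀ x, ∃ y, (C x, y) ∈ T.graph ∧ (y, x - C x) ∈ T.graph

variable {T : H →ₗ.[ℂ] H} {R S : H →L[ℂ] H}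

theorem apply_fst_eq_apply_snd (hR : R ∈ pmapCommutant T) (hS : ∀ x, (R x, S x) ∈ T.graph)
    {x y : H} (hxy : (x, y) ∈ T.graph) : S x = R y :=
  T.mem_graph_snd_inj (hS x) (hR _ hxy) rfl

theorem commute_of_mem_pmapCommutant (hS : ∀ x, (R x, S x) ∈ T.graph) {B : H →L[ℂ] H}
    (hB : B ∈ pmapCommutant T) (hRB : Commute R B) : Commute S B := by
  ext x
  have hBRx : R (B x) = B (R x) := congr($hRB.eq x)
  exact T.mem_graph_snd_inj (hS (B x)) (hB _ (hS x)) hBRx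

theorem mul_self_eq_one_sub (hR : R ∈ pmapCommutant T) (hS : ∀ x, (R x, S x) ∈ T.graph)
    {C : H →L[ℂ] H} (hC : IsOneAddSqRightInverse T C) (hRR : R * R = C) :
    S * S = 1 - C := by
  ext x
  obtain ⟨z, h1, h2⟩ := hC x
  have hz : z = R (S x) := T.mem_graph_snd_inj h1 (hR _ (hS x)) congr($hRR.symm x)
  exact T.mem_graph_snd_inj (hS (S x)) h2 hz.symm

theorem exists_apply_eq_of_mem_graph (hR : R ∈ pmapCommutant T)
    (hS : ∀ x, (R x, S x) ∈ T.graph) (hRS : R * R + S * S = 1) {x y : H}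
    (hxy : (x, y) ∈ T.graph) : ∃ w, R w = x ∧ S w = y := by
  have hRSy : R (S y) = S (R y) :=
    congr($((commute_of_mem_pmapCommutant hS hR (Commute.refl R)).eq) y).symm
  have hRw : R (R x + S y) = x := by
    calc R (R x + S y) = (R * R) x + S (R y) := by rw [map_add, hRSy]; rfl
      _ = (R * R + S * S) x := by rw [← apply_fst_eq_apply_snd hR hS hxy]; rfl
      _ = x := by rw [hRS]; rfl
  exact ⟨R x + S y, hRw, T.mem_graph_snd_inj (hS _) hxy hRw⟩

theorem mem_pmapCommutant_of_commute (hR : R ∈ pmapCommutant T)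
    (hS : ∀ x, (R x, S x) ∈ T.graph) (hRS : R * R + S * S = 1) {B : H →L[ℂ] H}
    (hRB : Commute R B) (hSB : Commute S B) : B ∈ pmapCommutant T := by
  rintro ⟨x, y⟩ hxy
  obtain ⟨w, rfl, rfl⟩ := exists_apply_eq_of_mem_graph hR hS hRS hxy
  convert hS (B w) using 2
  exacts [congr($hRB.eq w).symm, congr($hSB.eq w).symm]

end Graph

namespace IsSelfAdjoint

variable {T : H →ₗ.[ℂ] H}

theorem inner_graph (hT : IsSelfAdjoint T) {p q : H × H} (hp : p ∈ T.graph)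
    (hq : q ∈ T.graph) : ⟪p.2, q.1⟫_ℂ = ⟪p.1, q.2⟫_ℂ := by
  obtain ⟨x, hx1, hx2⟩ := T.mem_graph_iff.1 hp
  obtain ⟨y, hy1, hy2⟩ := T.mem_graph_iff.1 hq
  have h := LinearPMap.adjoint_isFormalAdjoint hT.dense_domain (T := T)
  rw [LinearPMap.isSelfAdjoint_def.1 hT] at h
  rw [← hx1, ← hx2, ← hy1, ← hy2]
  exact h x y

theorem mem_graph_of_inner (hT : IsSelfAdjoint T) {y z : H}
    (h : ∀ p ∈ T.graph, ⟪z, p.1⟫_ℂ = ⟪y, p.2⟫_ℂ) : (y, z) ∈ T.graph := by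
  have h' (u : T.domain) : ⟪z, (u : H)⟫_ℂ = ⟪y, T u⟫_ℂ := h _ (T.mem_graph u)
  have hy : y ∈ (T†).domain := LinearPMap.mem_adjoint_domain_of_exists y ⟨z, h'⟩
  have hTy : (T† ⟨y, hy⟩ : H) = z :=
    LinearPMap.adjoint_apply_eq hT.dense_domain ⟨y, hy⟩ h'
  have hyz : (y, z) ∈ (T†).graph := (T†).mem_graph_iff.2 ⟨⟨y, hy⟩, rfl, hTy⟩
  rwa [LinearPMap.isSelfAdjoint_def.1 hT] at hyz

theorem eq_zero_of_mem_graph (hT : IsSelfAdjoint T) {y z : H} (hy : (y, z) ∈ T.graph)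
    (hz : (z, -y) ∈ T.graph) : y = 0 := by
  have h := hT.inner_graph hz hy
  simp only [inner_neg_left, inner_self_eq_norm_sq_to_K] at h
  have hsum : ‖y‖ ^ 2 + ‖z‖ ^ 2 = 0 := by
    have : ((‖y‖ ^ 2 + ‖z‖ ^ 2 : ℝ) : ℂ) = 0 := by push_cast; linear_combination -h
    exact_mod_cast this
  exact norm_eq_zero.1 (by nlinarith [sq_nonneg ‖y‖, sq_nonneg ‖z‖])

theorem star_mem_pmapCommutant (hT : IsSelfAdjoint T) {A : H →L[ℂ] H}
    (hA : A ∈ pmapCommutant T) : star A ∈ pmapCommutant T := by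
  refine fun p hp => hT.mem_graph_of_inner fun q hq => ?_
  rw [ContinuousLinearMap.star_eq_adjoint, ContinuousLinearMap.adjoint_inner_left,
    ContinuousLinearMap.adjoint_inner_left]
  exact hT.inner_graph hp (hA q hq)

theorem cfc_mem_pmapCommutant (hT : IsSelfAdjoint T) {A : H →L[ℂ] H}
    (hA : A ∈ pmapCommutant T) (f : ℝ → ℝ) : cfc f A ∈ pmapCommutant T := by
  let s : StarSubalgebra ℂ (H →L[ℂ] H) :=
    { pmapCommutant T with star_mem' := hT.star_mem_pmapCommutant }
  have : IsClosed (s : Set (H →L[ℂ] H)) := isClosed_pmapCommutant hT.isClosed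
  exact cfc_mem (s := s) f hA

end IsSelfAdjoint

namespace IsOneAddSqRightInverse

variable {T : H →ₗ.[ℂ] H} {C : H →L[ℂ] H}

theorem eq_apply (hC : IsOneAddSqRightInverse T C) (hT : IsSelfAdjoint T) {x y z : H}
    (hy : (y, z) ∈ T.graph) (hz : (z, x - y) ∈ T.graph) : y = C x := by
  obtain ⟨z', h1, h2⟩ := hC x
  refine sub_eq_zero.1 (hT.eq_zero_of_mem_graph (T.graph.sub_mem hy h1) ?_)
  convert T.graph.sub_mem hz h2 using 1
  simp only [Prod.mk_sub_mk, sub_sub_sub_cancel_left, neg_sub]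

theorem mem_pmapCommutant (hC : IsOneAddSqRightInverse T C) (hT : IsSelfAdjoint T) :
    C ∈ pmapCommutant T := by
  rintro ⟨x, y⟩ hxy
  obtain ⟨z, h1, h2⟩ := hC x
  rwa [← hC.eq_apply hT h2 (T.graph.sub_mem hxy h1)]

theorem commute_of_mem_pmapCommutant (hC : IsOneAddSqRightInverse T C) (hT : IsSelfAdjoint T)
    {B : H →L[ℂ] H} (hB : B ∈ pmapCommutant T) : Commute C B := by
  ext x
  obtain ⟨z, h1, h2⟩ := hC x
  have h2' : (B z, B x - B (C x)) ∈ T.graph := by simpa using hB _ h2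
  exact (hC.eq_apply hT (hB _ h1) h2').symm

end IsOneAddSqRightInverse

theorem isSelfAdjoint_of_forall_mem_graph {T : H →ₗ.[ℂ] H} {R S : H →L[ℂ] H}
    (hT : IsSelfAdjoint T) (hR : R ∈ pmapCommutant T) (hRsa : IsSelfAdjoint R)
    (hS : ∀ x, (R x, S x) ∈ T.graph) : IsSelfAdjoint S := by
  have hsymm : ∀ a ∈ T.domain, ∀ c ∈ T.domain, ⟪S a, c⟫_ℂ = ⟪a, S c⟫_ℂ := by
    intro a ha c _
    have hab := T.mem_graph ⟨a, ha⟩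
    rw [apply_fst_eq_apply_snd hR hS hab, ← ContinuousLinearMap.adjoint_inner_right,
      ← ContinuousLinearMap.star_eq_adjoint, hRsa.star_eq]
    exact hT.inner_graph hab (hS c)
  have hdense := hT.dense_domain
  refine ContinuousLinearMap.isSelfAdjoint_iff_isSymmetric.2 fun a c => ?_
  have h := Continuous.ext_on (hdense.prod hdense) (f := fun p : H × H => ⟪S p.1, p.2⟫_ℂ)
    (g := fun p => ⟪p.1, S p.2⟫_ℂ) (by fun_prop) (by fun_prop) fun p hp => hsymm _ hp.1 _ hp.2
  exact congrFun h (a, c)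

namespace IsBoundedTransform

variable {T : H →ₗ.[ℂ] H} {S : H →L[ℂ] H}

theorem exists_factorization (h : IsBoundedTransform T S) :
    ∃ C R : H →L[ℂ] H, IsOneAddSqRightInverse T C ∧ cfc Real.sqrt C = R ∧ R * R = C ∧
      ∀ x, (R x, S x) ∈ T.graph := by
  obtain ⟨C, R, -, hR, hRR, hC, hS⟩ := h
  refine ⟨C, R, fun x => ?_, cfc_sqrt_eq_of_mul_self_eq ((R.nonneg_iff_isPositive).2 hR) hRR,
    hRR, fun x => ?_⟩
  · obtain ⟨h1, h2, hx⟩ := hC x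
    exact ⟨_, T.mem_graph_iff.2 ⟨⟨C x, h1⟩, rfl, rfl⟩,
      T.mem_graph_iff.2 ⟨⟨_, h2⟩, rfl, eq_sub_of_add_eq' hx⟩⟩
  · obtain ⟨hx, hSx⟩ := hS x
    exact T.mem_graph_iff.2 ⟨⟨R x, hx⟩, rfl, hSx.symm⟩

theorem isSelfAdjoint (h : IsBoundedTransform T S) (hT : IsSelfAdjoint T) : IsSelfAdjoint S := by
  obtain ⟨C, R, hC, hRC, -, hS⟩ := h.exists_factorization
  have hR : R ∈ pmapCommutant T := hRC ▸ hT.cfc_mem_pmapCommutant (hC.mem_pmapCommutant hT) _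
  exact isSelfAdjoint_of_forall_mem_graph hT hR (hRC ▸ cfc_predicate _ _) hS

theorem commutesPMap_iff_commute (h : IsBoundedTransform T S) (hT : IsSelfAdjoint T)
    {B : H →L[ℂ] H} : CommutesPMap T B ↔ Commute S B := by
  obtain ⟨C, R, hC, hRC, hRR, hS⟩ := h.exists_factorization
  have hR : R ∈ pmapCommutant T := hRC ▸ hT.cfc_mem_pmapCommutant (hC.mem_pmapCommutant hT) _
  have hRB : Commute C B → Commute R B := fun hCB => hRC ▸ hCB.cfc_real Real.sqrt
  have hSS := mul_self_eq_one_sub hR hS hC hRR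
  rw [← mem_pmapCommutant]
  constructor
  · intro hB
    exact commute_of_mem_pmapCommutant hS hB (hRB (hC.commute_of_mem_pmapCommutant hT hB))
  · intro hSB
    have hCB : Commute C B := by
      rw [show C = 1 - S * S by rw [hSS, sub_sub_cancel]]
      exact (Commute.one_left B).sub_left (hSB.mul_left hSB)
    exact mem_pmapCommutant_of_commute hR hS (by rw [hSS, hRR, add_sub_cancel]) (hRB hCB) hSB

end IsBoundedTransform

theorem wstarT_eq_wstarS_general (T : H →ₗ.[ℂ] H) (S : H →L[ℂ] H)
    (hsa : IsSelfAdjoint T)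
    (hbt : IsBoundedTransform T S) :
    Set.centralizer {R : H →L[ℂ] H | CommutesPMap T R} =
      Set.centralizer (Set.centralizer
        ((StarAlgebra.elemental ℂ S : StarSubalgebra ℂ (H →L[ℂ] H)) :
          Set (H →L[ℂ] H))) := by
  have hcomm : {R : H →L[ℂ] H | CommutesPMap T R} = Set.centralizer {S} := by
    ext B
    simp [hbt.commutesPMap_iff_commute hsa, Set.mem_centralizer_iff, commute_iff_eq]
  rw [hcomm, (hbt.isSelfAdjoint hsa).centralizer_elemental]

/-- `W*(T) = W*(S)`: the bicommutant `{T}''` of the set of bounded operators commuting with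
`T` equals the von Neumann algebra `C*(S)''` generated by the bounded transform `S`. -/
theorem wstarT_eq_wstarS (T : H →ₗ.[ℂ] H) (S : H →L[ℂ] H)
    (hdense : Dense (T.domain : Set H)) (hsa : IsSelfAdjoint T)
    (hbt : IsBoundedTransform T S) :
    Set.centralizer {R : H →L[ℂ] H | CommutesPMap T R} =
      Set.centralizer (Set.centralizer
        ((StarAlgebra.elemental ℂ S : StarSubalgebra ℂ (H →L[ℂ] H)) :
          Set (H →L[ℂ] H))) :=
  wstarT_eq_wstarS_general T S hsa hbt
end
end

section
/- Let T be a densely defined self-adjoint operator on a complex Hilbert space H with bounded transform S = T(I + T²)^{-1/2}. Then the bounded positive operator √(I - S²) (the positive square root of I - S²) is injective and its range equals the domain D(T) of T. -/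
/-!
Write `A = (I + T²)^{-1/2}`, so that `S = T A` and `A² = (I + T²)⁻¹`. Since `I + T²` is injective
for symmetric `T`, `A²` commutes with `S A`, hence so does its square root `A`; as `A` is
injective and self-adjoint it can be cancelled on the right, which gives `A S = S A` and makes `S`
self-adjoint. Then `S² = T A S = T S A = I - A²`, so `R = A` by uniqueness of positive square
roots, and every `v ∈ D(T)` equals `A (A v + S T v)` because `A T v = S v`.
-/

noncomputable section

variable {H : Type*} [NormedAddCommGroup H] [InnerProductSpace ℂ H] [CompleteSpace H]

namespace LinearPMap

variable {𝕜 E : Type*} [RCLike 𝕜] [NormedAddCommGroup E] [InnerProductSpace 𝕜 E]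
  {T : E →ₗ.[𝕜] E}

theorem IsFormalAdjoint.inner_eq_of_mem_graph_s19 (hT : T.IsFormalAdjoint T) {x u y v : E}
    (hxu : (x, u) ∈ T.graph) (hyv : (y, v) ∈ T.graph) :
    inner 𝕜 u y = inner 𝕜 x v := by
  obtain ⟨x', rfl, rfl⟩ := (T.mem_graph_iff).1 hxu
  obtain ⟨y', rfl, rfl⟩ := (T.mem_graph_iff).1 hyv
  exact hT x' y'

theorem IsFormalAdjoint.eq_zero_of_mem_graph_of_add_eq_zero (hT : T.IsFormalAdjoint T)
    {x u v : E} (hxu : (x, u) ∈ T.graph) (huv : (u, v) ∈ T.graph) (h : x + v = 0) :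
    x = 0 := by
  have hinner : inner 𝕜 x x + inner 𝕜 u u = 0 := by
    rw [← hT.inner_eq_of_mem_graph_s19 huv hxu, ← inner_add_left, h, inner_zero_left]
  have hsum : ‖x‖ ^ 2 + ‖u‖ ^ 2 = 0 := by
    rw [inner_self_eq_norm_sq_to_K, inner_self_eq_norm_sq_to_K] at hinner
    exact_mod_cast hinner
  have : ‖x‖ = 0 := by nlinarith [sq_nonneg ‖u‖, sq_nonneg ‖x‖]
  exact norm_eq_zero.1 this

end LinearPMap

theorem IsSelfAdjoint.isFormalAdjoint {𝕜 E : Type*} [RCLike 𝕜] [NormedAddCommGroup E]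
    [InnerProductSpace 𝕜 E] [CompleteSpace E] {T : E →ₗ.[𝕜] E} (hT : IsSelfAdjoint T) :
    T.IsFormalAdjoint T := by
  have := LinearPMap.adjoint_isFormalAdjoint hT.dense_domain
  rwa [LinearPMap.isSelfAdjoint_def.1 hT] at this

namespace ContinuousLinearMap

variable {𝕜 E : Type*} [RCLike 𝕜] [NormedAddCommGroup E] [InnerProductSpace 𝕜 E] [CompleteSpace E]

theorem isRightRegular_of_injective_adjoint {A : E →L[𝕜] E}
    (hA : Function.Injective (adjoint A)) : IsRightRegular A := by
  intro X Y hXY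
  have h : adjoint A * adjoint X = adjoint A * adjoint Y := by
    simpa only [mul_def, ← adjoint_comp] using congrArg adjoint hXY
  exact adjoint.injective (ext fun x => hA (congrArg (· x) h))

end ContinuousLinearMap

theorem Commute.of_mul_self_left {A : Type*} [CStarAlgebra A] [PartialOrder A]
    [StarOrderedRing A] {a b : A} (ha : 0 ≤ a) (h : Commute (a * a) b) : Commute a b := by
  have := h.cfc_nnreal NNReal.sqrt
  rwa [← CFC.sqrt_eq_cfc, CFC.sqrt_mul_self a] at this

/-- `A = (I + T²)^{-1/2}` and `S = T A`, through the graph of `T`: the last field says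
`T² A² = I - A²`. -/
structure IsBoundedTransformWith {E : Type*} [NormedAddCommGroup E] [InnerProductSpace ℂ E]
    (T : E →ₗ.[ℂ] E) (S A : E →L[ℂ] E) : Prop where
  isPositive : A.IsPositive
  mem_graph : ∀ x, (A x, S x) ∈ T.graph
  mem_graph_sub : ∀ x, (S (A x), x - A (A x)) ∈ T.graph

theorem IsBoundedTransform.exists_isBoundedTransformWith {E : Type*} [NormedAddCommGroup E]
    [InnerProductSpace ℂ E] {T : E →ₗ.[ℂ] E} {S : E →L[ℂ] E} (hbt : IsBoundedTransform T S) :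
    ∃ A, IsBoundedTransformWith T S A := by
  obtain ⟨C, A, -, hA, rfl, hC, hS⟩ := hbt
  have hAS : ∀ x, (A x, S x) ∈ T.graph := fun x => by
    obtain ⟨hx, hSx⟩ := hS x
    exact (T.image_iff hx).1 hSx
  refine ⟨A, hA, hAS, fun x => ?_⟩
  obtain ⟨h1, h2, hx⟩ := hC x
  have hu : (T ⟨(A * A) x, h1⟩ : E) = S (A x) :=
    T.mem_graph_snd_inj (T.mem_graph ⟨_, h1⟩) (hAS (A x)) rfl
  have hTu : ((T ⟨(A * A) x, h1⟩ : E), x - (A * A) x) ∈ T.graph :=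
    eq_sub_of_add_eq' hx ▸ T.mem_graph ⟨_, h2⟩
  rwa [hu] at hTu

namespace IsBoundedTransformWith

open ContinuousLinearMap

variable {E : Type*} [NormedAddCommGroup E] [InnerProductSpace ℂ E]
  {T : E →ₗ.[ℂ] E} {S A : E →L[ℂ] E}

theorem injective (h : IsBoundedTransformWith T S A) : Function.Injective A := by
  refine (injective_iff_map_eq_zero A).2 fun x hx => ?_
  have := h.mem_graph_sub x
  rw [hx, _root_.map_zero, _root_.map_zero, sub_zero] at this
  exact T.graph_fst_eq_zero_snd this rfl

theorem isRightRegular [CompleteSpace E] (h : IsBoundedTransformWith T S A) : IsRightRegular A :=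
  isRightRegular_of_injective_adjoint <| by
    rw [isSelfAdjoint_iff'.1 h.isPositive.isSelfAdjoint]
    exact h.injective

/-- Both sides are the unique preimage of `S A x` under `1 + T²`. -/
theorem commute_mul_self_mul (h : IsBoundedTransformWith T S A) (hT : T.IsFormalAdjoint T) :
    Commute (A * A) (S * A) := by
  set B := S * A
  set C := A * A
  refine ContinuousLinearMap.ext fun x => sub_eq_zero.1 ?_
  show C (B x) - B (C x) = 0
  have hCB : (C (B x), B (B x)) ∈ T.graph := h.mem_graph (A (B x))
  have hBB : (B (B x), B x - C (B x)) ∈ T.graph := h.mem_graph_sub (B x)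
  have hBC : (B (C x), C x - C (C x)) ∈ T.graph := h.mem_graph_sub (C x)
  have hC : (C x - C (C x), B x - B (C x)) ∈ T.graph :=
    T.graph.sub_mem (h.mem_graph (A x)) (h.mem_graph (A (C x)))
  have hd : (C (B x) - B (C x), B (B x) - (C x - C (C x))) ∈ T.graph := T.graph.sub_mem hCB hBC
  have hTd : (B (B x) - (C x - C (C x)), (B x - C (B x)) - (B x - B (C x))) ∈ T.graph :=
    T.graph.sub_mem hBB hC
  exact hT.eq_zero_of_mem_graph_of_add_eq_zero hd hTd (by abel)

theorem commute [CompleteSpace E] (h : IsBoundedTransformWith T S A)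
    (hT : T.IsFormalAdjoint T) : Commute A S := by
  have hA : Commute A (S * A) := Commute.of_mul_self_left
    ((nonneg_iff_isPositive A).2 h.isPositive) (h.commute_mul_self_mul hT)
  refine h.isRightRegular ?_
  simpa only [mul_assoc] using hA.eq

theorem isSelfAdjoint [CompleteSpace E] (h : IsBoundedTransformWith T S A)
    (hT : T.IsFormalAdjoint T) : IsSelfAdjoint S := by
  refine isSelfAdjoint_iff'.2 (h.isRightRegular ?_)
  show adjoint S * A = S * A
  refine ContinuousLinearMap.ext fun x => ext_inner_left ℂ fun y => ?_
  rw [← (h.commute hT).eq, mul_apply_eq_comp, mul_apply_eq_comp,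
    adjoint_inner_right, hT.inner_eq_of_mem_graph_s19 (h.mem_graph y) (h.mem_graph x)]
  exact h.isPositive.isSelfAdjoint.isSymmetric y (S x)

theorem mul_self [CompleteSpace E] (h : IsBoundedTransformWith T S A)
    (hT : T.IsFormalAdjoint T) : S * S = 1 - A * A := by
  refine ContinuousLinearMap.ext fun x => ?_
  have hSSx := h.mem_graph (S x)
  rw [← mul_apply_eq_comp A S, (h.commute hT).eq] at hSSx
  exact T.mem_graph_snd_inj hSSx (h.mem_graph_sub x) rfl

theorem apply_eq_apply_of_mem_graph [CompleteSpace E] (h : IsBoundedTransformWith T S A)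
    (hT : T.IsFormalAdjoint T) {v w : E} (hvw : (v, w) ∈ T.graph) : S v = A w := by
  refine ext_inner_left ℂ fun y => ?_
  calc inner ℂ y (S v) = inner ℂ (S y) v := ((h.isSelfAdjoint hT).isSymmetric y v).symm
    _ = inner ℂ (A y) w := hT.inner_eq_of_mem_graph_s19 (h.mem_graph y) hvw
    _ = inner ℂ y (A w) := h.isPositive.isSelfAdjoint.isSymmetric y w

theorem range_eq_domain [CompleteSpace E] (h : IsBoundedTransformWith T S A)
    (hT : T.IsFormalAdjoint T) : Set.range A = T.domain := by
  ext v
  refine ⟨fun ⟨x, hx⟩ => hx ▸ T.mem_domain_of_mem_graph (h.mem_graph x), fun hv => ?_⟩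
  set w := (T ⟨v, hv⟩ : E)
  have hvw : (v, w) ∈ T.graph := T.mem_graph ⟨v, hv⟩
  refine ⟨A v + S w, ?_⟩
  have hASw : A (S w) = S (S v) := by
    rw [← mul_apply_eq_comp, (h.commute hT).eq, mul_apply_eq_comp,
      h.apply_eq_apply_of_mem_graph hT hvw]
  rw [map_add, hASw, ← mul_apply_eq_comp S S, h.mul_self hT]
  simp

end IsBoundedTransformWith

theorem sqrt_one_sub_sq_injective_range_eq_domain_general (T : H →ₗ.[ℂ] H) (S : H →L[ℂ] H)
    (hsa : IsSelfAdjoint T)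
    (hbt : IsBoundedTransform T S)
    (R : H →L[ℂ] H) (hR : R.IsPositive) (hRR : R * R = 1 - S * S) :
    Function.Injective R ∧ Set.range R = (T.domain : Set H) := by
  obtain ⟨A, hA⟩ := hbt.exists_isBoundedTransformWith
  have hT := hsa.isFormalAdjoint
  have hAA : A * A = 1 - S * S := by rw [hA.mul_self hT, sub_sub_cancel]
  have hRA : R = A := by
    rw [← CFC.sqrt_unique hRR ((ContinuousLinearMap.nonneg_iff_isPositive R).2 hR),
      CFC.sqrt_unique hAA ((ContinuousLinearMap.nonneg_iff_isPositive A).2 hA.isPositive)]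
  subst hRA
  exact ⟨hA.injective, hA.range_eq_domain hT⟩

/-- The positive square root `√(I - S²)` is injective and its range is exactly the domain
of `T`. -/
theorem sqrt_one_sub_sq_injective_range_eq_domain (T : H →ₗ.[ℂ] H) (S : H →L[ℂ] H)
    (hdense : Dense (T.domain : Set H)) (hsa : IsSelfAdjoint T)
    (hbt : IsBoundedTransform T S)
    (R : H →L[ℂ] H) (hR : R.IsPositive) (hRR : R * R = 1 - S * S) :
    Function.Injective R ∧ Set.range R = (T.domain : Set H) :=
  sqrt_one_sub_sq_injective_range_eq_domain_general T S hsa hbt R hR hRR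
end
end
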